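/- Under a balanced ranked set sample with consistent rankings and true AUC δ₀, the Hájek projection T satisfies (mknl/(mk+nl)) · E[(T − (δ̂_BRSS − δ₀))²] = (δ₀ − δ̄₀² − (ᾱ − δ̄₀²) − (β̄ − δ̄₀²))/(mk + nl), and hence this quantity is at most (δ₀ − δ̄₀²)/(mk + nl). -/

import Mathlib

open MeasureTheory ProbabilityTheory Filter Finset Topology BoundedContinuousFunction

noncomputable section

namespace RSSAUC

/-- `φ(x,y) = 1` if `x < y` and `0` otherwise. -/
def phi (x y : ℝ) : ℝ := if x < y then 1 else 0

variable {Ω : Type*} [MeasurableSpace Ω]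

/-- The CDF of a random variable `Z` under the probability measure `P`. -/
def cdfOf (P : Measure Ω) (Z : Ω → ℝ) (t : ℝ) : ℝ := (P {ω | Z ω ≤ t}).toReal

/-- The CDF of a measure on `ℝ`. -/
def cdfM (μ : Measure ℝ) (t : ℝ) : ℝ := (μ (Set.Iic t)).toReal

/-- `P(W < Z)` for independent `W ~ μ` and `Z ~ ν`. -/
def probLT (μ ν : Measure ℝ) : ℝ := ((μ.prod ν) {p : ℝ × ℝ | p.1 < p.2}).toReal

/-- A balanced ranked set sample (BRSS) with consistent rankings: `X [i]j` (`i = 1,…,m`,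
`j = 1,…,k`) and `Y [r]s` (`r = 1,…,n`, `s = 1,…,l`) are mutually independent; within the
`i`-th (resp. `r`-th) stratum the `X` (resp. `Y`) variables share a common CDF `Fi i`
(resp. `Gr r`), and the continuous population CDFs satisfy `F = (1/m) ∑ᵢ Fi i` and
`G = (1/n) ∑ᵣ Gr r`. -/
structure IsBRSS (P : Measure Ω) (F G : ℝ → ℝ) {m n k l : ℕ}
    (Fi : Fin m → ℝ → ℝ) (Gr : Fin n → ℝ → ℝ)
    (X : Fin m → Fin k → Ω → ℝ) (Y : Fin n → Fin l → Ω → ℝ) : Prop where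
  hm : 1 ≤ m
  hn : 1 ≤ n
  hk : 1 < k
  hl : 1 < l
  contF : Continuous F
  contG : Continuous G
  meas_X : ∀ i j, Measurable (X i j)
  meas_Y : ∀ r s, Measurable (Y r s)
  indep : iIndepFun
      (Sum.elim (fun p : Fin m × Fin k => X p.1 p.2) (fun p : Fin n × Fin l => Y p.1 p.2)) P
  cdf_X : ∀ i j t, cdfOf P (X i j) t = Fi i t
  cdf_Y : ∀ r s t, cdfOf P (Y r s) t = Gr r t
  F_avg : ∀ t, F t = (∑ i, Fi i t) / m
  G_avg : ∀ t, G t = (∑ r, Gr r t) / n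

/-- An unbalanced ranked set sample (URSS) with consistent rankings. -/
structure IsURSS (P : Measure Ω) (F G : ℝ → ℝ) {m n : ℕ} {k : Fin m → ℕ} {l : Fin n → ℕ}
    (Fi : Fin m → ℝ → ℝ) (Gr : Fin n → ℝ → ℝ)
    (X : ∀ i, Fin (k i) → Ω → ℝ) (Y : ∀ r, Fin (l r) → Ω → ℝ) : Prop where
  hm : 1 ≤ m
  hn : 1 ≤ n
  hk : ∀ i, 1 < k i
  hl : ∀ r, 1 < l r
  contF : Continuous F
  contG : Continuous G
  meas_X : ∀ i j, Measurable (X i j)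
  meas_Y : ∀ r s, Measurable (Y r s)
  indep : iIndepFun
      (Sum.elim (fun p : Σ i, Fin (k i) => X p.1 p.2) (fun p : Σ r, Fin (l r) => Y p.1 p.2)) P
  cdf_X : ∀ i j t, cdfOf P (X i j) t = Fi i t
  cdf_Y : ∀ r s t, cdfOf P (Y r s) t = Gr r t
  F_avg : ∀ t, F t = (∑ i, Fi i t) / m
  G_avg : ∀ t, G t = (∑ r, Gr r t) / n

/-- Mann–Whitney statistic for BRSS data. -/
def deltaHatB {m n k l : ℕ} (X : Fin m → Fin k → Ω → ℝ) (Y : Fin n → Fin l → Ω → ℝ)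
    (ω : Ω) : ℝ :=
  (∑ i, ∑ j, ∑ r, ∑ s, phi (X i j ω) (Y r s ω)) / (m * k * n * l)

/-- Estimated placement value `Û_{rs}` for BRSS data. -/
def UhatB {m n k l : ℕ} (X : Fin m → Fin k → Ω → ℝ) (Y : Fin n → Fin l → Ω → ℝ)
    (r : Fin n) (s : Fin l) (ω : Ω) : ℝ :=
  1 - (∑ i, ∑ j, phi (X i j ω) (Y r s ω)) / (m * k)

/-- `V¹⁰(X_{[i]j})` for BRSS data. -/
def V10B {m n k l : ℕ} (X : Fin m → Fin k → Ω → ℝ) (Y : Fin n → Fin l → Ω → ℝ)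
    (i : Fin m) (j : Fin k) (ω : Ω) : ℝ :=
  (∑ r, ∑ s, phi (X i j ω) (Y r s ω)) / (n * l)

/-- `V⁰¹(Y_{[r]s})` for BRSS data. -/
def V01B {m n k l : ℕ} (X : Fin m → Fin k → Ω → ℝ) (Y : Fin n → Fin l → Ω → ℝ)
    (r : Fin n) (s : Fin l) (ω : Ω) : ℝ :=
  (∑ i, ∑ j, phi (X i j ω) (Y r s ω)) / (m * k)

/-- `(S¹⁰)²` for BRSS data. -/
def S10sqB {m n k l : ℕ} (X : Fin m → Fin k → Ω → ℝ) (Y : Fin n → Fin l → Ω → ℝ)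
    (ω : Ω) : ℝ :=
  ∑ i, ∑ j, (V10B X Y i j ω - (∑ j', V10B X Y i j' ω) / k) ^ 2 / ((m : ℝ) * ((k : ℝ) - 1))

/-- `(S⁰¹)²` for BRSS data. -/
def S01sqB {m n k l : ℕ} (X : Fin m → Fin k → Ω → ℝ) (Y : Fin n → Fin l → Ω → ℝ)
    (ω : Ω) : ℝ :=
  ∑ r, ∑ s, (V01B X Y r s ω - (∑ s', V01B X Y r s' ω) / l) ^ 2 / ((n : ℝ) * ((l : ℝ) - 1))

/-- Pooled variance estimator `S²` for BRSS data. -/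
def S2B {m n k l : ℕ} (X : Fin m → Fin k → Ω → ℝ) (Y : Fin n → Fin l → Ω → ℝ)
    (ω : Ω) : ℝ :=
  ((n * l : ℝ) * S10sqB X Y ω + (m * k : ℝ) * S01sqB X Y ω) / ((m * k : ℝ) + (n * l : ℝ))

/-- Mann–Whitney statistic for URSS data. -/
def deltaHatU {m n : ℕ} {k : Fin m → ℕ} {l : Fin n → ℕ}
    (X : ∀ i, Fin (k i) → Ω → ℝ) (Y : ∀ r, Fin (l r) → Ω → ℝ) (ω : Ω) : ℝ :=
  ∑ i, ∑ j, ∑ r, ∑ s, phi (X i j ω) (Y r s ω) / (m * k i * n * l r)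

/-- Estimated placement value `Û_{rs}` for URSS data. -/
def UhatU {m n : ℕ} {k : Fin m → ℕ} {l : Fin n → ℕ}
    (X : ∀ i, Fin (k i) → Ω → ℝ) (Y : ∀ r, Fin (l r) → Ω → ℝ)
    (r : Fin n) (s : Fin (l r)) (ω : Ω) : ℝ :=
  1 - ∑ i, ∑ j, phi (X i j ω) (Y r s ω) / (m * k i)

/-- `V¹⁰(X_{[i]j})` for URSS data. -/
def V10U {m n : ℕ} {k : Fin m → ℕ} {l : Fin n → ℕ}
    (X : ∀ i, Fin (k i) → Ω → ℝ) (Y : ∀ r, Fin (l r) → Ω → ℝ)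
    (i : Fin m) (j : Fin (k i)) (ω : Ω) : ℝ :=
  ∑ r, ∑ s, phi (X i j ω) (Y r s ω) / (n * l r)

/-- `V⁰¹(Y_{[r]s})` for URSS data. -/
def V01U {m n : ℕ} {k : Fin m → ℕ} {l : Fin n → ℕ}
    (X : ∀ i, Fin (k i) → Ω → ℝ) (Y : ∀ r, Fin (l r) → Ω → ℝ)
    (r : Fin n) (s : Fin (l r)) (ω : Ω) : ℝ :=
  ∑ i, ∑ j, phi (X i j ω) (Y r s ω) / (m * k i)

/-- `(S¹⁰)²` for URSS data. -/
def S10sqU {m n : ℕ} {k : Fin m → ℕ} {l : Fin n → ℕ}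
    (X : ∀ i, Fin (k i) → Ω → ℝ) (Y : ∀ r, Fin (l r) → Ω → ℝ) (ω : Ω) : ℝ :=
  ∑ i, ∑ j, (V10U X Y i j ω - (∑ j', V10U X Y i j' ω) / (k i)) ^ 2 /
    ((m : ℝ) * ((k i : ℝ) - 1))

/-- `(S⁰¹)²` for URSS data. -/
def S01sqU {m n : ℕ} {k : Fin m → ℕ} {l : Fin n → ℕ}
    (X : ∀ i, Fin (k i) → Ω → ℝ) (Y : ∀ r, Fin (l r) → Ω → ℝ) (ω : Ω) : ℝ :=
  ∑ r, ∑ s, (V01U X Y r s ω - (∑ s', V01U X Y r s' ω) / (l r)) ^ 2 /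
    ((n : ℝ) * ((l r : ℝ) - 1))

/-- Pooled variance estimator `S²` for URSS data, where `n_x = ∑ᵢ kᵢ` and `n_y = ∑ᵣ lᵣ`. -/
def S2U {m n : ℕ} {k : Fin m → ℕ} {l : Fin n → ℕ}
    (X : ∀ i, Fin (k i) → Ω → ℝ) (Y : ∀ r, Fin (l r) → Ω → ℝ) (ω : Ω) : ℝ :=
  ((∑ r, (l r : ℝ)) * S10sqU X Y ω + (∑ i, (k i : ℝ)) * S01sqU X Y ω) /
    ((∑ i, (k i : ℝ)) + (∑ r, (l r : ℝ)))

/-- Convergence in distribution of a sequence of real random variables on `(Ω, P)`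
to a limiting distribution `μ` on `ℝ`: integrals of every bounded continuous function
converge. -/
def TendstoInDistribution (P : Measure Ω) (Z : ℕ → Ω → ℝ) (μ : Measure ℝ) : Prop :=
  ∀ f : ℝ →ᵇ ℝ, Tendsto (fun t => ∫ ω, f (Z t ω) ∂P) atTop (𝓝 (∫ x, f x ∂μ))

/-- Convergence in probability of a sequence of real random variables to a constant. -/
def TendstoInProbability (P : Measure Ω) (Z : ℕ → Ω → ℝ) (c : ℝ) : Prop :=
  ∀ ε > 0, Tendsto (fun t => (P {ω | ε ≤ |Z t ω - c|}).toReal) atTop (𝓝 0)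

/-- `Z t = O_p(a t)`: stochastic boundedness at rate `a`. -/
def IsBigOp (P : Measure Ω) (Z : ℕ → Ω → ℝ) (a : ℕ → ℝ) : Prop :=
  ∀ ε > 0, ∃ M : ℝ, ∀ᶠ t in atTop, (P {ω | M * a t < |Z t ω|}).toReal < ε

/-- The chi-square distribution with one degree of freedom (the gamma distribution with
shape `1/2` and rate `1/2`). -/
def chiSq1 : Measure ℝ := gammaMeasure (1 / 2) (1 / 2)

/-- The standard normal distribution `N(0,1)`. -/
def stdNormal : Measure ℝ := gaussianReal 0 1


/-- `β = ∫ (1 − G(x))² dF(x)`, with `μ` the measure of the non-diseased population. -/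
def betaInt (μ : Measure ℝ) (G : ℝ → ℝ) : ℝ := ∫ x, (1 - G x) ^ 2 ∂μ

/-- `α = ∫ F(x)² dG(x)`, with `ν` the measure of the diseased population. -/
def alphaInt (ν : Measure ℝ) (F : ℝ → ℝ) : ℝ := ∫ x, F x ^ 2 ∂ν

/-- `β̄ = ∫ (1/n) ∑ᵣ (1 − G_{[r]}(x))² dF(x)`. -/
def betaBarInt {n : ℕ} (μ : Measure ℝ) (Gr : Fin n → ℝ → ℝ) : ℝ :=
  ∫ x, (∑ r, (1 - Gr r x) ^ 2) / n ∂μ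

/-- `ᾱ = ∫ (1/m) ∑ᵢ F_{[i]}(x)² dG(x)`. -/
def alphaBarInt {m : ℕ} (ν : Measure ℝ) (Fi : Fin m → ℝ → ℝ) : ℝ :=
  ∫ x, (∑ i, Fi i x ^ 2) / m ∂ν

/-- `δ̄₀² = (1/(mn)) ∑ᵢ ∑ᵣ δ̄_{ir}²` where `δ̄_{ir} = P(X_{[i]1} < Y_{[r]1})`,
given the stratum distributions `μi i` of `X_{[i]1}` and `νr r` of `Y_{[r]1}`. -/
def deltaBar0sq {m n : ℕ} (μi : Fin m → Measure ℝ) (νr : Fin n → Measure ℝ) : ℝ :=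
  (∑ i, ∑ r, probLT (μi i) (νr r) ^ 2) / (m * n)

/-- `φ₁₀(x) = (1/(nl)) ∑_{r,s} E[φ(x, Y_{[r]s})]`. -/
def phi10B (P : Measure Ω) {n l : ℕ} (Y : Fin n → Fin l → Ω → ℝ) (x : ℝ) : ℝ :=
  (∑ r, ∑ s, ∫ ω, phi x (Y r s ω) ∂P) / (n * l)

/-- `φ₀₁(y) = (1/(mk)) ∑_{i,j} E[φ(X_{[i]j}, y)]`. -/
def phi01B (P : Measure Ω) {m k : ℕ} (X : Fin m → Fin k → Ω → ℝ) (y : ℝ) : ℝ :=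
  (∑ i, ∑ j, ∫ ω, phi (X i j ω) y ∂P) / (m * k)

/-- Deterministic (data-level) estimated placement value `Û_{rs}` for balanced data. -/
def UhatD {m n k l : ℕ} (X : Fin m → Fin k → ℝ) (Y : Fin n → Fin l → ℝ)
    (r : Fin n) (s : Fin l) : ℝ :=
  1 - (∑ i, ∑ j, phi (X i j) (Y r s)) / (m * k)

/-- Deterministic (data-level) Mann–Whitney statistic for balanced data. -/
def deltaHatD {m n k l : ℕ} (X : Fin m → Fin k → ℝ) (Y : Fin n → Fin l → ℝ) : ℝ :=
  (∑ i, ∑ j, ∑ r, ∑ s, phi (X i j) (Y r s)) / (m * k * n * l)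

/-- Deterministic (data-level) estimated placement value `Û_{rs}` for unbalanced data. -/
def UhatUD {m n : ℕ} {k : Fin m → ℕ} {l : Fin n → ℕ}
    (X : ∀ i, Fin (k i) → ℝ) (Y : ∀ r, Fin (l r) → ℝ) (r : Fin n) (s : Fin (l r)) : ℝ :=
  1 - ∑ i, ∑ j, phi (X i j) (Y r s) / (m * k i)

/-- Deterministic (data-level) Mann–Whitney statistic for unbalanced data. -/
def deltaHatUD {m n : ℕ} {k : Fin m → ℕ} {l : Fin n → ℕ}
    (X : ∀ i, Fin (k i) → ℝ) (Y : ∀ r, Fin (l r) → ℝ) : ℝ :=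
  ∑ i, ∑ j, ∑ r, ∑ s, phi (X i j) (Y r s) / (m * k i * n * l r)

/-- Estimated placement value `Ŵ_{ij} = (1/(nl)) ∑_{r,s} φ(Y_{[r]s}, X_{[i]j})` of `X`
(the diseased distribution `G` as reference). -/
def WhatB {m n k l : ℕ} (X : Fin m → Fin k → Ω → ℝ) (Y : Fin n → Fin l → Ω → ℝ)
    (i : Fin m) (j : Fin k) (ω : Ω) : ℝ :=
  (∑ r, ∑ s, phi (Y r s ω) (X i j ω)) / (n * l)

section AuxHelpers
open Set
open scoped ENNReal

lemma measurableSet_lt' : MeasurableSet {p : ℝ × ℝ | p.1 < p.2} :=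
  measurableSet_lt measurable_fst measurable_snd

lemma phi_eq_ind (x y : ℝ) :
    phi x y = ({p : ℝ × ℝ | p.1 < p.2}).indicator (fun _ => (1:ℝ)) (x, y) := by
  simp [phi, Set.indicator_apply]

lemma phi_eq_ind_Ioi (x y : ℝ) : phi x y = (Set.Ioi x).indicator (fun _ => (1:ℝ)) y := by
  simp [phi, Set.indicator_apply]

lemma phi_eq_ind_Iio (x y : ℝ) : phi x y = (Set.Iio y).indicator (fun _ => (1:ℝ)) x := by
  simp [phi, Set.indicator_apply]

lemma measurable_phi : Measurable (fun p : ℝ × ℝ => phi p.1 p.2) := by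
  have : (fun p : ℝ × ℝ => phi p.1 p.2)
      = ({p : ℝ × ℝ | p.1 < p.2}).indicator (fun _ => (1:ℝ)) := by
    funext p; rw [← Prod.mk.eta (p := p), phi_eq_ind]
  rw [this]
  exact measurable_const.indicator measurableSet_lt'

lemma phi_nonneg (x y : ℝ) : 0 ≤ phi x y := by unfold phi; split <;> norm_num

lemma phi_le_one (x y : ℝ) : phi x y ≤ 1 := by unfold phi; split <;> norm_num

lemma abs_phi_le (x y : ℝ) : |phi x y| ≤ 1 := by
  rw [abs_le]; exact ⟨by linarith [phi_nonneg x y], phi_le_one x y⟩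

variable (μ' ν' : Measure ℝ) [IsProbabilityMeasure μ'] [IsProbabilityMeasure ν']

lemma cdfM_mono : Monotone (cdfM μ') := fun a b hab =>
  ENNReal.toReal_mono (measure_ne_top _ _) (measure_mono (Set.Iic_subset_Iic.2 hab))

lemma measurable_cdfM : Measurable (cdfM μ') := (cdfM_mono μ').measurable

lemma cdfM_nonneg (t : ℝ) : 0 ≤ cdfM μ' t := ENNReal.toReal_nonneg

lemma cdfM_le_one (t : ℝ) : cdfM μ' t ≤ 1 := by
  have h := measure_mono (Set.subset_univ (Set.Iic t)) (μ := μ')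
  have := ENNReal.toReal_mono (measure_ne_top μ' _) h
  simpa [cdfM] using this

lemma measure_Ioi_toReal (x : ℝ) : (ν' (Set.Ioi x)).toReal = 1 - cdfM ν' x := by
  have h : Set.Ioi x = (Set.Iic x)ᶜ := by simp
  rw [h, measure_compl measurableSet_Iic (measure_ne_top _ _), measure_univ,
    ENNReal.toReal_sub_of_le prob_le_one ENNReal.one_ne_top]
  simp [cdfM]

lemma integrable_of_bdd {α : Type*} [MeasurableSpace α] {μ : Measure α} [IsFiniteMeasure μ]
    {f : α → ℝ} {C : ℝ} (hf : AEStronglyMeasurable f μ) (h : ∀ x, |f x| ≤ C) :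
    Integrable f μ :=
  ⟨hf, HasFiniteIntegral.of_bounded (C := C) (ae_of_all _ (by simpa [Real.norm_eq_abs] using h))⟩

lemma integral_phi_right (x : ℝ) : ∫ y, phi x y ∂ν' = 1 - cdfM ν' x := by
  have : ∀ y, phi x y = (Set.Ioi x).indicator (fun _ => (1:ℝ)) y := phi_eq_ind_Ioi x
  rw [integral_congr_ae (ae_of_all _ this), integral_indicator_const (1:ℝ) measurableSet_Ioi]
  rw [smul_eq_mul, mul_one, measureReal_def, measure_Ioi_toReal]

lemma measure_Iio_eq_of_atomless (hat : ∀ x, μ' {x} = 0) (y : ℝ) :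
    μ' (Set.Iio y) = μ' (Set.Iic y) := by
  have h : Set.Iic y = Set.Iio y ∪ {y} := (Set.Iio_union_right).symm
  refine le_antisymm (measure_mono Set.Iio_subset_Iic_self) ?_
  calc μ' (Set.Iic y) = μ' (Set.Iio y ∪ {y}) := by rw [h]
    _ ≤ μ' (Set.Iio y) + μ' {y} := measure_union_le _ _
    _ = μ' (Set.Iio y) := by rw [hat]; simp

lemma integral_phi_left (hat : ∀ x, μ' {x} = 0) (y : ℝ) :
    ∫ x, phi x y ∂μ' = cdfM μ' y := by
  have : ∀ x, phi x y = (Set.Iio y).indicator (fun _ => (1:ℝ)) x := fun x => phi_eq_ind_Iio x y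
  rw [integral_congr_ae (ae_of_all _ this), integral_indicator_const (1:ℝ) measurableSet_Iio]
  rw [smul_eq_mul, mul_one, measureReal_def, measure_Iio_eq_of_atomless μ' hat]
  rfl


lemma probLT_left : probLT μ' ν' = ∫ x, (1 - cdfM ν' x) ∂μ' := by
  unfold probLT
  rw [Measure.prod_apply measurableSet_lt']
  have h1 : ∀ x, (Prod.mk x ⁻¹' {p : ℝ × ℝ | p.1 < p.2}) = Set.Ioi x := by
    intro x; ext y; simp
  have hmeas : Measurable (fun x => ν' (Set.Ioi x)) := by
    have : Antitone (fun x => ν' (Set.Ioi x)) := fun a b hab =>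
      measure_mono (Set.Ioi_subset_Ioi hab)
    exact this.measurable
  rw [show (fun x => ν' (Prod.mk x ⁻¹' {p : ℝ × ℝ | p.1 < p.2})) = fun x => ν' (Set.Ioi x) by
    funext x; rw [h1]]
  rw [← integral_toReal hmeas.aemeasurable (ae_of_all _ fun x => measure_lt_top _ _)]
  exact integral_congr_ae (ae_of_all _ fun x => measure_Ioi_toReal ν' x)

lemma probLT_right (hat : ∀ x, μ' {x} = 0) : probLT μ' ν' = ∫ y, cdfM μ' y ∂ν' := by
  unfold probLT
  rw [Measure.prod_apply_symm measurableSet_lt']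
  have h1 : (fun y => μ' ((fun x => (x, y)) ⁻¹' {p : ℝ × ℝ | p.1 < p.2}))
      = fun y => μ' (Set.Iic y) := by
    funext y
    have : ((fun x => (x, y)) ⁻¹' {p : ℝ × ℝ | p.1 < p.2}) = Set.Iio y := by ext x; simp
    rw [this, measure_Iio_eq_of_atomless μ' hat]
  rw [h1]
  have hmeas : Measurable (fun y => μ' (Set.Iic y)) := by
    have : Monotone (fun y => μ' (Set.Iic y)) := fun a b hab =>
      measure_mono (Set.Iic_subset_Iic.2 hab)
    exact this.measurable
  rw [← integral_toReal hmeas.aemeasurable (ae_of_all _ fun x => measure_lt_top _ _)]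
  rfl

lemma probLT_nonneg : 0 ≤ probLT μ' ν' := ENNReal.toReal_nonneg

lemma probLT_le_one : probLT μ' ν' ≤ 1 := by
  have h := measure_mono (Set.subset_univ {p : ℝ × ℝ | p.1 < p.2}) (μ := μ'.prod ν')
  have := ENNReal.toReal_mono (measure_ne_top _ _) h
  simpa [probLT] using this

lemma integrable_oneSubCdf : Integrable (fun x => 1 - cdfM ν' x) μ' := by
  refine integrable_of_bdd (C := 1) ?_ ?_
  · exact ((measurable_const.sub (measurable_cdfM ν')).aestronglyMeasurable)
  · intro x
    rw [abs_le]
    constructor <;> nlinarith [cdfM_nonneg ν' x, cdfM_le_one ν' x]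

lemma integrable_cdf : Integrable (cdfM μ') ν' := by
  refine integrable_of_bdd (C := 1) ((measurable_cdfM μ').aestronglyMeasurable) ?_
  intro x
  rw [abs_le]
  constructor <;> nlinarith [cdfM_nonneg μ' x, cdfM_le_one μ' x]

/-- The R-kernel. -/
def rker (μ' ν' : Measure ℝ) (x y : ℝ) : ℝ :=
  phi x y - (1 - cdfM ν' x) - cdfM μ' y + probLT μ' ν'

lemma abs_rker_le (x y : ℝ) : |rker μ' ν' x y| ≤ 4 := by
  unfold rker
  have h1 := abs_phi_le x y
  have h2 := cdfM_nonneg ν' x; have h3 := cdfM_le_one ν' x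
  have h4 := cdfM_nonneg μ' y; have h5 := cdfM_le_one μ' y
  have h6 := probLT_nonneg μ' ν'; have h7 := probLT_le_one μ' ν'
  rw [abs_le] at h1 ⊢
  constructor <;> nlinarith [h1.1, h1.2]

lemma measurable_rker : Measurable (fun p : ℝ × ℝ => rker μ' ν' p.1 p.2) := by
  unfold rker
  exact (((measurable_phi.sub ((measurable_const.sub (measurable_cdfM ν')).comp
    measurable_fst)).sub ((measurable_cdfM μ').comp measurable_snd)).add measurable_const)

lemma rker_int_right (hat : ∀ x, μ' {x} = 0) (x : ℝ) :
    ∫ y, rker μ' ν' x y ∂ν' = 0 := by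
  unfold rker
  have h1 : Integrable (fun y => phi x y) ν' := by
    refine integrable_of_bdd (C := 1) ?_ (fun y => abs_phi_le x y)
    have : Measurable fun y => phi x y := by
      have : (fun y => phi x y) = (Set.Ioi x).indicator (fun _ => (1:ℝ)) := by
        funext y; exact phi_eq_ind_Ioi x y
      rw [this]; exact measurable_const.indicator measurableSet_Ioi
    exact this.aestronglyMeasurable
  have hc : (fun y => phi x y - (1 - cdfM ν' x) - cdfM μ' y + probLT μ' ν')
      = fun y => (phi x y + -(cdfM μ' y)) + (probLT μ' ν' - (1 - cdfM ν' x)) :=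
    funext fun y => by ring
  have h2 : Integrable (fun y => phi x y + -(cdfM μ' y)) ν' := by
    exact h1.add (integrable_cdf μ' ν').neg
  have h3 : Integrable (fun y => -(cdfM μ' y)) ν' := by exact (integrable_cdf μ' ν').neg
  rw [hc, integral_add h2 (integrable_const _), integral_add h1 h3, integral_neg,
    integral_const, integral_phi_right, ← probLT_right μ' ν' hat]
  simp
  ring

lemma rker_int_left (hat : ∀ x, μ' {x} = 0) (y : ℝ) :
    ∫ x, rker μ' ν' x y ∂μ' = 0 := by
  unfold rker
  have h1 : Integrable (fun x => phi x y) μ' := by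
    refine integrable_of_bdd (C := 1) ?_ (fun x => abs_phi_le x y)
    have : Measurable fun x => phi x y := by
      have : (fun x => phi x y) = (Set.Iio y).indicator (fun _ => (1:ℝ)) := by
        funext x; exact phi_eq_ind_Iio x y
      rw [this]; exact measurable_const.indicator measurableSet_Iio
    exact this.aestronglyMeasurable
  have hc : (fun x => phi x y - (1 - cdfM ν' x) - cdfM μ' y + probLT μ' ν')
      = fun x => (phi x y + -(1 - cdfM ν' x)) + (probLT μ' ν' - cdfM μ' y) :=
    funext fun x => by ring
  have h2 : Integrable (fun x => phi x y + -(1 - cdfM ν' x)) μ' := by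
    exact h1.add (integrable_oneSubCdf μ' ν').neg
  have h3 : Integrable (fun x => -(1 - cdfM ν' x)) μ' := by
    exact (integrable_oneSubCdf μ' ν').neg
  rw [hc, integral_add h2 (integrable_const _), integral_add h1 h3, integral_neg,
    integral_const, integral_phi_left μ' hat, ← probLT_left μ' ν']
  simp
  ring


lemma integral_phi_prod : ∫ p : ℝ × ℝ, phi p.1 p.2 ∂(μ'.prod ν') = probLT μ' ν' := by
  have h : (fun p : ℝ × ℝ => phi p.1 p.2)
      = ({p : ℝ × ℝ | p.1 < p.2}).indicator (fun _ => (1:ℝ)) := by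
    funext p; rw [← Prod.mk.eta (p := p), phi_eq_ind]
  rw [h, integral_indicator_const (1:ℝ) measurableSet_lt', smul_eq_mul, mul_one]
  rfl

lemma integrable_phi_prod : Integrable (fun p : ℝ × ℝ => phi p.1 p.2) (μ'.prod ν') :=
  integrable_of_bdd (C := 1) measurable_phi.aestronglyMeasurable (fun p => abs_phi_le p.1 p.2)

lemma measurable_u1 : Measurable (fun p : ℝ × ℝ => 1 - cdfM ν' p.1) :=
  (measurable_const.sub (measurable_cdfM ν')).comp measurable_fst

lemma measurable_f2 : Measurable (fun p : ℝ × ℝ => cdfM μ' p.2) :=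
  (measurable_cdfM μ').comp measurable_snd

lemma abs_u_le (x : ℝ) : |1 - cdfM ν' x| ≤ 1 := by
  rw [abs_le]; constructor <;> nlinarith [cdfM_nonneg ν' x, cdfM_le_one ν' x]

lemma abs_cdfM_le (y : ℝ) : |cdfM μ' y| ≤ 1 := by
  rw [abs_le]; constructor <;> nlinarith [cdfM_nonneg μ' y, cdfM_le_one μ' y]

lemma A2 : ∫ p : ℝ × ℝ, phi p.1 p.2 * (1 - cdfM ν' p.1) ∂(μ'.prod ν')
    = ∫ x, (1 - cdfM ν' x) ^ 2 ∂μ' := by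
  have hint : Integrable (fun p : ℝ × ℝ => phi p.1 p.2 * (1 - cdfM ν' p.1)) (μ'.prod ν') := by
    refine integrable_of_bdd (C := 1) (measurable_phi.mul (measurable_u1 ν')).aestronglyMeasurable
      (fun p => ?_)
    rw [abs_mul]
    calc |phi p.1 p.2| * |1 - cdfM ν' p.1| ≤ 1 * 1 :=
      mul_le_mul (abs_phi_le _ _) (abs_u_le ν' _) (abs_nonneg _) zero_le_one
    _ = 1 := by ring
  rw [integral_prod _ hint]
  refine integral_congr_ae (ae_of_all _ fun x => ?_)
  show (∫ y, phi x y * (1 - cdfM ν' x) ∂ν') = (1 - cdfM ν' x) ^ 2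
  rw [integral_mul_const, integral_phi_right]
  ring

lemma A3 (hat : ∀ x, μ' {x} = 0) :
    ∫ p : ℝ × ℝ, phi p.1 p.2 * cdfM μ' p.2 ∂(μ'.prod ν')
    = ∫ y, cdfM μ' y ^ 2 ∂ν' := by
  have hint : Integrable (fun p : ℝ × ℝ => phi p.1 p.2 * cdfM μ' p.2) (μ'.prod ν') := by
    refine integrable_of_bdd (C := 1) (measurable_phi.mul (measurable_f2 μ')).aestronglyMeasurable
      (fun p => ?_)
    rw [abs_mul]
    calc |phi p.1 p.2| * |cdfM μ' p.2| ≤ 1 * 1 :=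
      mul_le_mul (abs_phi_le _ _) (abs_cdfM_le μ' _) (abs_nonneg _) zero_le_one
    _ = 1 := by ring
  rw [integral_prod_symm _ hint]
  refine integral_congr_ae (ae_of_all _ fun y => ?_)
  show (∫ x, phi x y * cdfM μ' y ∂μ') = cdfM μ' y ^ 2
  rw [integral_mul_const, integral_phi_left μ' hat]
  ring

lemma int_u_eq : ∫ x, (1 - cdfM ν' x) ∂μ' = probLT μ' ν' := (probLT_left μ' ν').symm

lemma int_c_eq (hat : ∀ x, μ' {x} = 0) : ∫ y, cdfM μ' y ∂ν' = probLT μ' ν' :=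
  (probLT_right μ' ν' hat).symm

lemma integrable_u_sq : Integrable (fun x => (1 - cdfM ν' x) ^ 2) μ' := by
  refine integrable_of_bdd (C := 1)
    (((measurable_const.sub (measurable_cdfM ν')).pow_const 2).aestronglyMeasurable) (fun x => ?_)
  rw [abs_le]
  constructor <;> nlinarith [cdfM_nonneg ν' x, cdfM_le_one ν' x]

lemma integrable_c_sq : Integrable (fun y => cdfM μ' y ^ 2) ν' := by
  refine integrable_of_bdd (C := 1) (((measurable_cdfM μ').pow_const 2).aestronglyMeasurable)
    (fun x => ?_)
  rw [abs_le]
  constructor <;> nlinarith [cdfM_nonneg μ' x, cdfM_le_one μ' x]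

lemma key_int (hat : ∀ x, μ' {x} = 0) :
    ∫ p : ℝ × ℝ, rker μ' ν' p.1 p.2 ∂(μ'.prod ν') = 0 := by
  have hint : Integrable (fun p : ℝ × ℝ => rker μ' ν' p.1 p.2) (μ'.prod ν') :=
    integrable_of_bdd (C := 4) (measurable_rker μ' ν').aestronglyMeasurable
      (fun p => abs_rker_le μ' ν' p.1 p.2)
  rw [integral_prod _ hint]
  have : ∀ x, ∫ y, rker μ' ν' x y ∂ν' = 0 := rker_int_right μ' ν' hat
  rw [integral_congr_ae (ae_of_all _ this)]
  simp

lemma key_sq (hat : ∀ x, μ' {x} = 0) :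
    ∫ p : ℝ × ℝ, rker μ' ν' p.1 p.2 ^ 2 ∂(μ'.prod ν')
      = probLT μ' ν' + probLT μ' ν' ^ 2
        - ∫ y, cdfM μ' y ^ 2 ∂ν' - ∫ x, (1 - cdfM ν' x) ^ 2 ∂μ' := by
  set δ := probLT μ' ν' with hδdef
  have hδ0 := probLT_nonneg μ' ν'
  have hδ1 := probLT_le_one μ' ν'
  have hg1 : Integrable (fun p : ℝ × ℝ => phi p.1 p.2) (μ'.prod ν') := integrable_phi_prod μ' ν'
  have hg2 : Integrable (fun p : ℝ × ℝ => 2 * δ * phi p.1 p.2) (μ'.prod ν') := by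
    exact hg1.const_mul _
  have hg3 : Integrable (fun p : ℝ × ℝ => -2 * (phi p.1 p.2 * (1 - cdfM ν' p.1)))
      (μ'.prod ν') := by
    refine Integrable.const_mul ?_ _
    refine integrable_of_bdd (C := 1) (measurable_phi.mul (measurable_u1 ν')).aestronglyMeasurable
      (fun p => ?_)
    rw [abs_mul]
    calc |phi p.1 p.2| * |1 - cdfM ν' p.1| ≤ 1 * 1 :=
      mul_le_mul (abs_phi_le _ _) (abs_u_le ν' _) (abs_nonneg _) zero_le_one
    _ = 1 := by ring
  have hg4 : Integrable (fun p : ℝ × ℝ => -2 * (phi p.1 p.2 * cdfM μ' p.2)) (μ'.prod ν') := by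
    refine Integrable.const_mul ?_ _
    refine integrable_of_bdd (C := 1) (measurable_phi.mul (measurable_f2 μ')).aestronglyMeasurable
      (fun p => ?_)
    rw [abs_mul]
    calc |phi p.1 p.2| * |cdfM μ' p.2| ≤ 1 * 1 :=
      mul_le_mul (abs_phi_le _ _) (abs_cdfM_le μ' _) (abs_nonneg _) zero_le_one
    _ = 1 := by ring
  have hg5 : Integrable (fun p : ℝ × ℝ => (δ - (1 - cdfM ν' p.1)) ^ 2) (μ'.prod ν') := by
    refine integrable_of_bdd (C := 4)
      (((measurable_const.sub (measurable_u1 ν')).pow_const 2).aestronglyMeasurable)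
      (fun p => ?_)
    have := abs_u_le ν' p.1
    rw [abs_le] at this ⊢
    constructor <;> nlinarith [this.1, this.2, hδ0, hδ1]
  have hg6 : Integrable (fun p : ℝ × ℝ => cdfM μ' p.2 ^ 2) (μ'.prod ν') := by
    refine integrable_of_bdd (C := 1) (((measurable_f2 μ').pow_const 2).aestronglyMeasurable)
      (fun p => ?_)
    have := abs_cdfM_le μ' p.2
    rw [abs_le] at this ⊢
    constructor <;> nlinarith [this.1, this.2]
  have hg7 : Integrable (fun p : ℝ × ℝ => -2 * ((δ - (1 - cdfM ν' p.1)) * cdfM μ' p.2))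
      (μ'.prod ν') := by
    refine Integrable.const_mul ?_ _
    refine integrable_of_bdd (C := 2)
      (((measurable_const.sub (measurable_u1 ν')).mul (measurable_f2 μ')).aestronglyMeasurable)
      (fun p => ?_)
    have h2 := abs_u_le ν' p.1
    have h3 := abs_cdfM_le μ' p.2
    rw [abs_mul]
    calc |δ - (1 - cdfM ν' p.1)| * |cdfM μ' p.2| ≤ 2 * 1 := by
          refine mul_le_mul ?_ h3 (abs_nonneg _) (by norm_num)
          rw [abs_le] at h2 ⊢
          constructor <;> nlinarith [h2.1, h2.2, hδ0, hδ1]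
    _ = 2 := by ring
  have hA2 : Integrable (fun p : ℝ × ℝ => phi p.1 p.2 + 2 * δ * phi p.1 p.2) (μ'.prod ν') := by
    exact hg1.add hg2
  have hA3 : Integrable (fun p : ℝ × ℝ => phi p.1 p.2 + 2 * δ * phi p.1 p.2
      + -2 * (phi p.1 p.2 * (1 - cdfM ν' p.1))) (μ'.prod ν') := by exact hA2.add hg3
  have hA4 : Integrable (fun p : ℝ × ℝ => phi p.1 p.2 + 2 * δ * phi p.1 p.2
      + -2 * (phi p.1 p.2 * (1 - cdfM ν' p.1)) + -2 * (phi p.1 p.2 * cdfM μ' p.2))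
      (μ'.prod ν') := by exact hA3.add hg4
  have hA5 : Integrable (fun p : ℝ × ℝ => phi p.1 p.2 + 2 * δ * phi p.1 p.2
      + -2 * (phi p.1 p.2 * (1 - cdfM ν' p.1)) + -2 * (phi p.1 p.2 * cdfM μ' p.2)
      + (δ - (1 - cdfM ν' p.1)) ^ 2) (μ'.prod ν') := by exact hA4.add hg5
  have hA6 : Integrable (fun p : ℝ × ℝ => phi p.1 p.2 + 2 * δ * phi p.1 p.2
      + -2 * (phi p.1 p.2 * (1 - cdfM ν' p.1)) + -2 * (phi p.1 p.2 * cdfM μ' p.2)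
      + (δ - (1 - cdfM ν' p.1)) ^ 2 + cdfM μ' p.2 ^ 2) (μ'.prod ν') := by exact hA5.add hg6
  have hpt : (fun p : ℝ × ℝ => rker μ' ν' p.1 p.2 ^ 2)
      = fun p : ℝ × ℝ => phi p.1 p.2 + 2 * δ * phi p.1 p.2
      + -2 * (phi p.1 p.2 * (1 - cdfM ν' p.1)) + -2 * (phi p.1 p.2 * cdfM μ' p.2)
      + (δ - (1 - cdfM ν' p.1)) ^ 2 + cdfM μ' p.2 ^ 2
      + -2 * ((δ - (1 - cdfM ν' p.1)) * cdfM μ' p.2) := by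
    funext p
    show rker μ' ν' p.1 p.2 ^ 2 = _
    unfold rker phi
    rw [← hδdef]
    split <;> ring
  rw [hpt, integral_add hA6 hg7, integral_add hA5 hg6, integral_add hA4 hg5,
    integral_add hA3 hg4, integral_add hA2 hg3, integral_add hg1 hg2]
  have e1 : ∫ p : ℝ × ℝ, phi p.1 p.2 ∂(μ'.prod ν') = δ := integral_phi_prod μ' ν'
  have e2 : ∫ p : ℝ × ℝ, 2 * δ * phi p.1 p.2 ∂(μ'.prod ν') = 2 * δ * δ := by
    rw [integral_const_mul, e1]
  have e3 : ∫ p : ℝ × ℝ, -2 * (phi p.1 p.2 * (1 - cdfM ν' p.1)) ∂(μ'.prod ν')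
      = -2 * ∫ x, (1 - cdfM ν' x) ^ 2 ∂μ' := by rw [integral_const_mul, A2]
  have e4 : ∫ p : ℝ × ℝ, -2 * (phi p.1 p.2 * cdfM μ' p.2) ∂(μ'.prod ν')
      = -2 * ∫ y, cdfM μ' y ^ 2 ∂ν' := by rw [integral_const_mul, A3 μ' ν' hat]
  have e5 : ∫ p : ℝ × ℝ, (δ - (1 - cdfM ν' p.1)) ^ 2 ∂(μ'.prod ν')
      = ∫ x, (δ - (1 - cdfM ν' x)) ^ 2 ∂μ' := by
    rw [integral_fun_fst (f := fun x => (δ - (1 - cdfM ν' x)) ^ 2)]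
    simp
  have e6 : ∫ p : ℝ × ℝ, cdfM μ' p.2 ^ 2 ∂(μ'.prod ν') = ∫ y, cdfM μ' y ^ 2 ∂ν' := by
    rw [integral_fun_snd (f := fun y => cdfM μ' y ^ 2)]
    simp
  have e7 : ∫ p : ℝ × ℝ, -2 * ((δ - (1 - cdfM ν' p.1)) * cdfM μ' p.2) ∂(μ'.prod ν')
      = -2 * (0 * δ) := by
    rw [integral_const_mul, integral_prod_mul (f := fun x => δ - (1 - cdfM ν' x)) (g := cdfM μ')]
    congr 1
    rw [integral_sub (integrable_const _) (integrable_oneSubCdf μ' ν'), integral_const,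
      int_u_eq μ' ν', int_c_eq μ' ν' hat]
    simp [hδdef]
  rw [e1, e2, e3, e4, e5, e6, e7]
  have e8 : ∫ x, (δ - (1 - cdfM ν' x)) ^ 2 ∂μ'
      = δ ^ 2 - 2 * δ * δ + ∫ x, (1 - cdfM ν' x) ^ 2 ∂μ' := by
    have hptt : (fun x => (δ - (1 - cdfM ν' x)) ^ 2)
        = fun x => (δ ^ 2 - 2 * δ * (1 - cdfM ν' x)) + (1 - cdfM ν' x) ^ 2 :=
      funext fun x => by ring
    have hb1 : Integrable (fun x => δ ^ 2 - 2 * δ * (1 - cdfM ν' x)) μ' := by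
      exact (integrable_const _).sub ((integrable_oneSubCdf μ' ν').const_mul _)
    have hb2 : Integrable (fun x => 2 * δ * (1 - cdfM ν' x)) μ' := by
      exact (integrable_oneSubCdf μ' ν').const_mul _
    rw [hptt, integral_add hb1 (integrable_u_sq μ' ν'),
      integral_sub (integrable_const _) hb2,
      integral_const, integral_const_mul, int_u_eq μ' ν']
    simp [hδdef]
  rw [e8]
  ring


lemma measurable_phi_right (x : ℝ) : Measurable (fun y => phi x y) := by
  have : (fun y => phi x y) = (Set.Ioi x).indicator (fun _ => (1:ℝ)) := by
    funext y; exact phi_eq_ind_Ioi x y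
  rw [this]; exact measurable_const.indicator measurableSet_Ioi

lemma measurable_phi_left (y : ℝ) : Measurable (fun x => phi x y) := by
  have : (fun x => phi x y) = (Set.Iio y).indicator (fun _ => (1:ℝ)) := by
    funext x; exact phi_eq_ind_Iio x y
  rw [this]; exact measurable_const.indicator measurableSet_Iio

section OmegaSide

lemma map_eq_of_cdf (P : Measure Ω) [IsProbabilityMeasure P] {Z : Ω → ℝ} (hZ : Measurable Z)
    (μ1 : Measure ℝ) [IsProbabilityMeasure μ1] (h : ∀ t, cdfOf P Z t = cdfM μ1 t) :
    Measure.map Z P = μ1 := by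
  have hpm : IsProbabilityMeasure (Measure.map Z P) := Measure.isProbabilityMeasure_map hZ.aemeasurable
  refine Measure.ext_of_Iic _ _ (fun t => ?_)
  rw [Measure.map_apply hZ measurableSet_Iic]
  have h1 : (P (Z ⁻¹' Set.Iic t)).toReal = (μ1 (Set.Iic t)).toReal := h t
  exact (ENNReal.toReal_eq_toReal_iff' (measure_ne_top _ _) (measure_ne_top _ _)).mp h1

lemma atom_zero_of_cont (μ1 : Measure ℝ) [IsProbabilityMeasure μ1]
    (h : Continuous (cdfM μ1)) (x : ℝ) : μ1 {x} = 0 := by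
  have key : ∀ n : ℕ, (μ1 {x}).toReal ≤ cdfM μ1 x - cdfM μ1 (x - 1/(n+1)) := by
    intro n
    have hpos : (0:ℝ) < 1/(n+1) := by positivity
    have hy : x - 1/(n+1 : ℝ) < x := by linarith
    have hsub : {x} ⊆ Set.Ioc (x - 1/(n+1)) x := by
      intro z hz
      rw [Set.mem_singleton_iff] at hz
      subst hz
      exact ⟨hy, le_refl _⟩
    have h1 : μ1 {x} ≤ μ1 (Set.Ioc (x - 1/(n+1)) x) := measure_mono hsub
    have h2 : (μ1 (Set.Ioc (x - 1/(n+1)) x)).toReal = cdfM μ1 x - cdfM μ1 (x - 1/(n+1)) := by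
      have hd : Set.Ioc (x - 1/(n+1)) x = Set.Iic x \ Set.Iic (x - 1/(n+1)) := by
        ext z; simp [and_comm]
      rw [hd, measure_diff (Set.Iic_subset_Iic.2 hy.le) nullMeasurableSet_Iic
        (measure_ne_top _ _),
        ENNReal.toReal_sub_of_le (measure_mono (Set.Iic_subset_Iic.2 hy.le)) (measure_ne_top _ _)]
      rfl
    calc (μ1 {x}).toReal ≤ (μ1 (Set.Ioc (x - 1/(n+1)) x)).toReal :=
        ENNReal.toReal_mono (measure_ne_top _ _) h1
      _ = cdfM μ1 x - cdfM μ1 (x - 1/(n+1)) := h2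
  have hseq : Tendsto (fun n : ℕ => x - 1/(n+1 : ℝ)) atTop (𝓝 x) := by
    have := tendsto_one_div_add_atTop_nhds_zero_nat (𝕜 := ℝ)
    have h2 := this.const_sub x
    simpa using h2
  have hlim : Tendsto (fun n : ℕ => cdfM μ1 x - cdfM μ1 (x - 1/(n+1))) atTop (𝓝 0) := by
    have h3 : Tendsto (fun n : ℕ => cdfM μ1 (x - 1/(n+1))) atTop (𝓝 (cdfM μ1 x)) :=
      (h.tendsto x).comp hseq
    have h4 := h3.const_sub (cdfM μ1 x)
    simpa using h4
  have hle : (μ1 {x}).toReal ≤ 0 := ge_of_tendsto' hlim key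
  have h0 : (μ1 {x}).toReal = 0 := le_antisymm hle ENNReal.toReal_nonneg
  rcases (ENNReal.toReal_eq_zero_iff _).mp h0 with h | h
  · exact h
  · exact absurd h (measure_ne_top _ _)

lemma smul_eq_sum_of_cdf {m : ℕ} (μ1 : Measure ℝ) [IsProbabilityMeasure μ1]
    (μs : Fin m → Measure ℝ) [∀ i, IsProbabilityMeasure (μs i)]
    (h : ∀ t, (m : ℝ) * cdfM μ1 t = ∑ i, cdfM (μs i) t) :
    (m : ℝ≥0∞) • μ1 = ∑ i, μs i := by
  have hfin : IsFiniteMeasure ((m : ℝ≥0∞) • μ1) := by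
    constructor
    simp only [Measure.smul_apply, smul_eq_mul, measure_univ, mul_one]
    exact ENNReal.natCast_lt_top m
  refine Measure.ext_of_Iic _ _ (fun t => ?_)
  have hl : ((m : ℝ≥0∞) • μ1) (Set.Iic t) = (m : ℝ≥0∞) * μ1 (Set.Iic t) := rfl
  have hr : (∑ i, μs i) (Set.Iic t) = ∑ i, μs i (Set.Iic t) := by
    simp [Measure.finset_sum_apply]
  rw [hl, hr]
  refine (ENNReal.toReal_eq_toReal_iff' ?_ ?_).mp ?_
  · exact ENNReal.mul_ne_top (ENNReal.natCast_ne_top m) (measure_ne_top _ _)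
  · exact ENNReal.sum_ne_top.mpr (fun i _ => measure_ne_top _ _)
  · rw [ENNReal.toReal_mul, ENNReal.toReal_sum (fun i _ => measure_ne_top _ _)]
    simpa [cdfM] using h t

lemma atom_zero_of_sum {m : ℕ} (μ1 : Measure ℝ) [IsProbabilityMeasure μ1]
    (μs : Fin m → Measure ℝ) [∀ i, IsProbabilityMeasure (μs i)]
    (hmeq : (m : ℝ≥0∞) • μ1 = ∑ i, μs i) (h0 : ∀ x, μ1 {x} = 0) (i : Fin m) (x : ℝ) :
    μs i {x} = 0 := by
  have h1 : (∑ j, μs j) {x} = 0 := by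
    rw [← hmeq]
    show (m : ℝ≥0∞) * μ1 {x} = 0
    rw [h0 x, mul_zero]
  rw [Measure.finset_sum_apply] at h1
  exact (Finset.sum_eq_zero_iff.mp h1) i (Finset.mem_univ i)

lemma integral_avg_meas {m : ℕ} (μ1 : Measure ℝ) [IsProbabilityMeasure μ1]
    (μs : Fin m → Measure ℝ) [∀ i, IsProbabilityMeasure (μs i)]
    (hmeq : (m : ℝ≥0∞) • μ1 = ∑ i, μs i) (f : ℝ → ℝ) (hfi : ∀ i, Integrable f (μs i)) :
    (m : ℝ) * ∫ x, f x ∂μ1 = ∑ i, ∫ x, f x ∂(μs i) := by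
  have h1 : ∫ x, f x ∂((m : ℝ≥0∞) • μ1) = (m : ℝ) * ∫ x, f x ∂μ1 := by
    rw [integral_smul_measure]
    simp [smul_eq_mul]
  rw [← h1, hmeq, integral_finset_sum_measure (fun i _ => hfi i)]

lemma integral_pair (P : Measure Ω) [IsProbabilityMeasure P] {W Z : Ω → ℝ}
    (hW : Measurable W) (hZ : Measurable Z) (hind : IndepFun W Z P)
    {μ1 ν1 : Measure ℝ} [IsProbabilityMeasure μ1] [IsProbabilityMeasure ν1]
    (hmW : Measure.map W P = μ1) (hmZ : Measure.map Z P = ν1)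
    {g : ℝ × ℝ → ℝ} (hg : AEStronglyMeasurable g (μ1.prod ν1)) :
    ∫ ω, g (W ω, Z ω) ∂P = ∫ p, g p ∂(μ1.prod ν1) := by
  have hmap : Measure.map (fun ω => (W ω, Z ω)) P = μ1.prod ν1 := by
    rw [(indepFun_iff_map_prod_eq_prod_map_map hW.aemeasurable hZ.aemeasurable).mp hind,
      hmW, hmZ]
  rw [← hmap] at hg ⊢
  exact (integral_map (hW.prodMk hZ).aemeasurable hg).symm

lemma integral_tripleX (P : Measure Ω) [IsProbabilityMeasure P] {W Z Z' : Ω → ℝ}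
    (hW : Measurable W) (hZ : Measurable Z) (hZ' : Measurable Z')
    (hindZZ : IndepFun Z Z' P) (hindX : IndepFun W (fun ω => (Z ω, Z' ω)) P)
    {μ1 ν1 ν2 : Measure ℝ} [IsProbabilityMeasure μ1] [IsProbabilityMeasure ν1]
    [IsProbabilityMeasure ν2]
    (hmW : Measure.map W P = μ1) (hmZ : Measure.map Z P = ν1)
    (hmZ' : Measure.map Z' P = ν2)
    {g : ℝ × (ℝ × ℝ) → ℝ} (hg : AEStronglyMeasurable g (μ1.prod (ν1.prod ν2))) :
    ∫ ω, g (W ω, (Z ω, Z' ω)) ∂P = ∫ p, g p ∂(μ1.prod (ν1.prod ν2)) := by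
  have hmapZZ : Measure.map (fun ω => (Z ω, Z' ω)) P = ν1.prod ν2 := by
    rw [(indepFun_iff_map_prod_eq_prod_map_map hZ.aemeasurable hZ'.aemeasurable).mp hindZZ,
      hmZ, hmZ']
  have hmap : Measure.map (fun ω => (W ω, (Z ω, Z' ω))) P = μ1.prod (ν1.prod ν2) := by
    rw [(indepFun_iff_map_prod_eq_prod_map_map hW.aemeasurable
      ((hZ.prodMk hZ').aemeasurable)).mp hindX, hmW, hmapZZ]
  rw [← hmap] at hg ⊢
  exact (integral_map (hW.prodMk (hZ.prodMk hZ')).aemeasurable hg).symm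


lemma integrable_rker_comp (P : Measure Ω) [IsProbabilityMeasure P] {W Z : Ω → ℝ}
    (hW : Measurable W) (hZ : Measurable Z)
    (μ1 ν1 : Measure ℝ) [IsProbabilityMeasure μ1] [IsProbabilityMeasure ν1] :
    Integrable (fun ω => rker μ1 ν1 (W ω) (Z ω)) P :=
  integrable_of_bdd (C := 4)
    (((measurable_rker μ1 ν1).comp (hW.prodMk hZ)).aestronglyMeasurable)
    (fun ω => abs_rker_le μ1 ν1 (W ω) (Z ω))

lemma int_rker_zero (P : Measure Ω) [IsProbabilityMeasure P] {W Z : Ω → ℝ}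
    (hW : Measurable W) (hZ : Measurable Z) (hind : IndepFun W Z P)
    {μ1 ν1 : Measure ℝ} [IsProbabilityMeasure μ1] [IsProbabilityMeasure ν1]
    (hmW : Measure.map W P = μ1) (hmZ : Measure.map Z P = ν1)
    (hat : ∀ x, μ1 {x} = 0) :
    ∫ ω, rker μ1 ν1 (W ω) (Z ω) ∂P = 0 := by
  rw [integral_pair P hW hZ hind hmW hmZ (measurable_rker μ1 ν1).aestronglyMeasurable]
  exact key_int μ1 ν1 hat

lemma diag_val (P : Measure Ω) [IsProbabilityMeasure P] {W Z : Ω → ℝ}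
    (hW : Measurable W) (hZ : Measurable Z) (hind : IndepFun W Z P)
    {μ1 ν1 : Measure ℝ} [IsProbabilityMeasure μ1] [IsProbabilityMeasure ν1]
    (hmW : Measure.map W P = μ1) (hmZ : Measure.map Z P = ν1)
    (hat : ∀ x, μ1 {x} = 0) :
    ∫ ω, rker μ1 ν1 (W ω) (Z ω) ^ 2 ∂P
      = probLT μ1 ν1 + probLT μ1 ν1 ^ 2
        - ∫ y, cdfM μ1 y ^ 2 ∂ν1 - ∫ x, (1 - cdfM ν1 x) ^ 2 ∂μ1 := by
  rw [integral_pair P hW hZ hind hmW hmZ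
    (((measurable_rker μ1 ν1).pow_const 2).aestronglyMeasurable)]
  exact key_sq μ1 ν1 hat

lemma cross_zero_shareX (P : Measure Ω) [IsProbabilityMeasure P] {W Z Z' : Ω → ℝ}
    (hW : Measurable W) (hZ : Measurable Z) (hZ' : Measurable Z')
    (hindZZ : IndepFun Z Z' P) (hindX : IndepFun W (fun ω => (Z ω, Z' ω)) P)
    {μ1 ν1 ν2 : Measure ℝ} [IsProbabilityMeasure μ1] [IsProbabilityMeasure ν1]
    [IsProbabilityMeasure ν2]
    (hmW : Measure.map W P = μ1) (hmZ : Measure.map Z P = ν1)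
    (hmZ' : Measure.map Z' P = ν2) (hat : ∀ x, μ1 {x} = 0) :
    ∫ ω, rker μ1 ν1 (W ω) (Z ω) * rker μ1 ν2 (W ω) (Z' ω) ∂P = 0 := by
  have hgm : Measurable (fun q : ℝ × (ℝ × ℝ) => rker μ1 ν1 q.1 q.2.1 * rker μ1 ν2 q.1 q.2.2) := by
    have h1 : Measurable (fun q : ℝ × (ℝ × ℝ) => (q.1, q.2.1)) :=
      measurable_fst.prodMk (measurable_fst.comp measurable_snd)
    have h2 : Measurable (fun q : ℝ × (ℝ × ℝ) => (q.1, q.2.2)) :=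
      measurable_fst.prodMk (measurable_snd.comp measurable_snd)
    exact ((measurable_rker μ1 ν1).comp h1).mul ((measurable_rker μ1 ν2).comp h2)
  rw [integral_tripleX P hW hZ hZ' hindZZ hindX hmW hmZ hmZ' hgm.aestronglyMeasurable]
  have hint : Integrable (fun q : ℝ × (ℝ × ℝ) => rker μ1 ν1 q.1 q.2.1 * rker μ1 ν2 q.1 q.2.2)
      (μ1.prod (ν1.prod ν2)) := by
    refine integrable_of_bdd (C := 16) hgm.aestronglyMeasurable (fun q => ?_)
    rw [abs_mul]
    calc |rker μ1 ν1 q.1 q.2.1| * |rker μ1 ν2 q.1 q.2.2| ≤ 4 * 4 :=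
      mul_le_mul (abs_rker_le _ _ _ _) (abs_rker_le _ _ _ _) (abs_nonneg _) (by norm_num)
    _ = 16 := by norm_num
  rw [integral_prod _ hint]
  have hinner : ∀ x, ∫ q2 : ℝ × ℝ, rker μ1 ν1 x q2.1 * rker μ1 ν2 x q2.2 ∂(ν1.prod ν2)
      = 0 := by
    intro x
    rw [integral_prod_mul (f := fun y => rker μ1 ν1 x y) (g := fun y => rker μ1 ν2 x y),
      rker_int_right μ1 ν1 hat x, zero_mul]
  rw [integral_congr_ae (ae_of_all _ fun x => by
    show (∫ q2 : ℝ × ℝ, rker μ1 ν1 x q2.1 * rker μ1 ν2 x q2.2 ∂(ν1.prod ν2)) = 0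
    exact hinner x)]
  simp

lemma cross_zero_shareY (P : Measure Ω) [IsProbabilityMeasure P] {Z W W' : Ω → ℝ}
    (hZ : Measurable Z) (hW : Measurable W) (hW' : Measurable W')
    (hindWW : IndepFun W W' P) (hindY : IndepFun Z (fun ω => (W ω, W' ω)) P)
    {ν1 μ1 μ2 : Measure ℝ} [IsProbabilityMeasure ν1] [IsProbabilityMeasure μ1]
    [IsProbabilityMeasure μ2]
    (hmZ : Measure.map Z P = ν1) (hmW : Measure.map W P = μ1)
    (hmW' : Measure.map W' P = μ2)
    (hat1 : ∀ x, μ1 {x} = 0) (hat2 : ∀ x, μ2 {x} = 0) :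
    ∫ ω, rker μ1 ν1 (W ω) (Z ω) * rker μ2 ν1 (W' ω) (Z ω) ∂P = 0 := by
  have hgm : Measurable (fun q : ℝ × (ℝ × ℝ) => rker μ1 ν1 q.2.1 q.1 * rker μ2 ν1 q.2.2 q.1) := by
    have h1 : Measurable (fun q : ℝ × (ℝ × ℝ) => (q.2.1, q.1)) :=
      (measurable_fst.comp measurable_snd).prodMk measurable_fst
    have h2 : Measurable (fun q : ℝ × (ℝ × ℝ) => (q.2.2, q.1)) :=
      (measurable_snd.comp measurable_snd).prodMk measurable_fst
    exact ((measurable_rker μ1 ν1).comp h1).mul ((measurable_rker μ2 ν1).comp h2)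
  rw [integral_tripleX P hZ hW hW' hindWW hindY hmZ hmW hmW' hgm.aestronglyMeasurable]
  have hint : Integrable (fun q : ℝ × (ℝ × ℝ) => rker μ1 ν1 q.2.1 q.1 * rker μ2 ν1 q.2.2 q.1)
      (ν1.prod (μ1.prod μ2)) := by
    refine integrable_of_bdd (C := 16) hgm.aestronglyMeasurable (fun q => ?_)
    rw [abs_mul]
    calc |rker μ1 ν1 q.2.1 q.1| * |rker μ2 ν1 q.2.2 q.1| ≤ 4 * 4 :=
      mul_le_mul (abs_rker_le _ _ _ _) (abs_rker_le _ _ _ _) (abs_nonneg _) (by norm_num)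
    _ = 16 := by norm_num
  rw [integral_prod _ hint]
  have hinner : ∀ y, ∫ q2 : ℝ × ℝ, rker μ1 ν1 q2.1 y * rker μ2 ν1 q2.2 y ∂(μ1.prod μ2)
      = 0 := by
    intro y
    rw [integral_prod_mul (f := fun x => rker μ1 ν1 x y) (g := fun x => rker μ2 ν1 x y),
      rker_int_left μ1 ν1 hat1 y, zero_mul]
  rw [integral_congr_ae (ae_of_all _ fun y => by
    show (∫ q2 : ℝ × ℝ, rker μ1 ν1 q2.1 y * rker μ2 ν1 q2.2 y ∂(μ1.prod μ2)) = 0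
    exact hinner y)]
  simp

lemma cross_zero_disjoint (P : Measure Ω) [IsProbabilityMeasure P] {W Z W' Z' : Ω → ℝ}
    (hW : Measurable W) (hZ : Measurable Z) (hW' : Measurable W') (hZ' : Measurable Z')
    (hind : IndepFun (fun ω => (W ω, Z ω)) (fun ω => (W' ω, Z' ω)) P)
    (hindWZ : IndepFun W Z P)
    {μ1 ν1 μ2 ν2 : Measure ℝ} [IsProbabilityMeasure μ1] [IsProbabilityMeasure ν1]
    [IsProbabilityMeasure μ2] [IsProbabilityMeasure ν2]
    (hmW : Measure.map W P = μ1) (hmZ : Measure.map Z P = ν1)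
    (hat : ∀ x, μ1 {x} = 0) :
    ∫ ω, rker μ1 ν1 (W ω) (Z ω) * rker μ2 ν2 (W' ω) (Z' ω) ∂P = 0 := by
  have hcomp : IndepFun (fun ω => rker μ1 ν1 (W ω) (Z ω))
      (fun ω => rker μ2 ν2 (W' ω) (Z' ω)) P :=
    hind.comp (measurable_rker μ1 ν1) (measurable_rker μ2 ν2)
  have hmul := hcomp.integral_fun_mul_eq_mul_integral
    (integrable_rker_comp P hW hZ μ1 ν1).aestronglyMeasurable (integrable_rker_comp P hW' hZ' μ2 ν2).aestronglyMeasurable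
  have hmul' : ∫ ω, rker μ1 ν1 (W ω) (Z ω) * rker μ2 ν2 (W' ω) (Z' ω) ∂P
      = (∫ ω, rker μ1 ν1 (W ω) (Z ω) ∂P) * ∫ ω, rker μ2 ν2 (W' ω) (Z' ω) ∂P := hmul
  rw [hmul', int_rker_zero P hW hZ hindWZ hmW hmZ hat, zero_mul]

end OmegaSide


end AuxHelpers

open scoped ENNReal

/-- Under BRSS with consistent rankings and true AUC `δ₀`, the Hájek
projection `T` satisfies `(mknl/(mk+nl))·E[(T − (δ̂_BRSS − δ₀))²]`
`= (δ₀ − δ̄₀² − (ᾱ − δ̄₀²) − (β̄ − δ̄₀²))/(mk + nl)`, which is at most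
`(δ₀ − δ̄₀²)/(mk + nl)`. -/
theorem brss_hajek_projection {Ω : Type*} [MeasurableSpace Ω]
    (P : Measure Ω) [IsProbabilityMeasure P]
    (F G : ℝ → ℝ) {m n k l : ℕ} (Fi : Fin m → ℝ → ℝ) (Gr : Fin n → ℝ → ℝ)
    (μ ν : Measure ℝ) [IsProbabilityMeasure μ] [IsProbabilityMeasure ν]
    (hμ : ∀ t, cdfM μ t = F t) (hν : ∀ t, cdfM ν t = G t)
    (μi : Fin m → Measure ℝ) [∀ i, IsProbabilityMeasure (μi i)]
    (hμi : ∀ i t, cdfM (μi i) t = Fi i t)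
    (νr : Fin n → Measure ℝ) [∀ r, IsProbabilityMeasure (νr r)]
    (hνr : ∀ r t, cdfM (νr r) t = Gr r t)
    (δ₀ : ℝ) (hδ₀ : δ₀ = probLT μ ν)
    (X : Fin m → Fin k → Ω → ℝ) (Y : Fin n → Fin l → Ω → ℝ)
    (hRSS : IsBRSS P F G Fi Gr X Y)
    (T : Ω → ℝ)
    (hT : ∀ ω, T ω =
      (∑ i, ∑ j, (phi10B P Y (X i j ω) - probLT (μi i) ν)) / ((m : ℝ) * (k : ℝ)) +
      (∑ r, ∑ s, (phi01B P X (Y r s ω) - probLT μ (νr r))) / ((n : ℝ) * (l : ℝ))) :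
    (((m : ℝ) * (k : ℝ) * (n : ℝ) * (l : ℝ)) / ((m : ℝ) * (k : ℝ) + (n : ℝ) * (l : ℝ))) *
        ∫ ω, (T ω - (deltaHatB X Y ω - δ₀)) ^ 2 ∂P =
      (δ₀ - deltaBar0sq μi νr - (alphaBarInt ν Fi - deltaBar0sq μi νr) -
          (betaBarInt μ Gr - deltaBar0sq μi νr)) /
        ((m : ℝ) * (k : ℝ) + (n : ℝ) * (l : ℝ)) ∧
    (((m : ℝ) * (k : ℝ) * (n : ℝ) * (l : ℝ)) / ((m : ℝ) * (k : ℝ) + (n : ℝ) * (l : ℝ))) *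
        ∫ ω, (T ω - (deltaHatB X Y ω - δ₀)) ^ 2 ∂P ≤
      (δ₀ - deltaBar0sq μi νr) / ((m : ℝ) * (k : ℝ) + (n : ℝ) * (l : ℝ)) := by
  classical
  have hm0 : 0 < m := hRSS.hm
  have hn0 : 0 < n := hRSS.hn
  have hk0 : 0 < k := lt_trans one_pos hRSS.hk
  have hl0 : 0 < l := lt_trans one_pos hRSS.hl
  have hmR : (0:ℝ) < m := by exact_mod_cast hm0
  have hnR : (0:ℝ) < n := by exact_mod_cast hn0
  have hkR : (0:ℝ) < k := by exact_mod_cast hk0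
  have hlR : (0:ℝ) < l := by exact_mod_cast hl0
  have hFi : ∀ i, Fi i = cdfM (μi i) := fun i => funext fun t => (hμi i t).symm
  have hGr : ∀ r, Gr r = cdfM (νr r) := fun r => funext fun t => (hνr r t).symm
  have lawX : ∀ i j, Measure.map (X i j) P = μi i := fun i j =>
    map_eq_of_cdf P (hRSS.meas_X i j) (μi i)
      (fun t => (hRSS.cdf_X i j t).trans (hμi i t).symm)
  have lawY : ∀ r s, Measure.map (Y r s) P = νr r := fun r s =>
    map_eq_of_cdf P (hRSS.meas_Y r s) (νr r)
      (fun t => (hRSS.cdf_Y r s t).trans (hνr r t).symm)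
  have μAtom : ∀ x, μ {x} = 0 := by
    apply atom_zero_of_cont
    have h : cdfM μ = F := funext hμ
    rw [h]; exact hRSS.contF
  have hMμ : (m : ℝ≥0∞) • μ = ∑ i, μi i := by
    apply smul_eq_sum_of_cdf
    intro t
    rw [hμ t, hRSS.F_avg t]
    have h : ∀ i, cdfM (μi i) t = Fi i t := fun i => hμi i t
    simp only [h]
    field_simp
  have hMν : (n : ℝ≥0∞) • ν = ∑ r, νr r := by
    apply smul_eq_sum_of_cdf
    intro t
    rw [hν t, hRSS.G_avg t]
    have h : ∀ r, cdfM (νr r) t = Gr r t := fun r => hνr r t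
    simp only [h]
    field_simp
  have μiAtom : ∀ i x, μi i {x} = 0 := fun i x => atom_zero_of_sum μ μi hMμ μAtom i x
  have hphi10 : ∀ x, phi10B P Y x = (∑ r : Fin n, ∑ _s : Fin l, (1 - cdfM (νr r) x)) / ((n:ℝ) * (l:ℝ)) := by
    intro x
    unfold phi10B
    congr 1
    refine Finset.sum_congr rfl fun r _ => Finset.sum_congr rfl fun s _ => ?_
    have h1 : ∫ ω, phi x (Y r s ω) ∂P = ∫ y, phi x y ∂(νr r) := by
      rw [← lawY r s]
      exact (integral_map (hRSS.meas_Y r s).aemeasurable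
        (measurable_phi_right x).aestronglyMeasurable).symm
    rw [h1, integral_phi_right]
  have hphi01 : ∀ y, phi01B P X y = (∑ i : Fin m, ∑ _j : Fin k, cdfM (μi i) y) / ((m:ℝ) * (k:ℝ)) := by
    intro y
    unfold phi01B
    congr 1
    refine Finset.sum_congr rfl fun i _ => Finset.sum_congr rfl fun j _ => ?_
    have h1 : ∫ ω, phi (X i j ω) y ∂P = ∫ x, phi x y ∂(μi i) := by
      rw [← lawX i j]
      exact (integral_map (hRSS.meas_X i j).aemeasurable
        (measurable_phi_left y).aestronglyMeasurable).symm
    rw [h1, integral_phi_left (μi i) (μiAtom i)]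
  have hPiν : ∀ i, probLT (μi i) ν = (∑ r, probLT (μi i) (νr r)) / (n:ℝ) := by
    intro i
    rw [probLT_left (μi i) ν]
    have hpt : ∀ x, 1 - cdfM ν x = (∑ r, (1 - cdfM (νr r) x)) / (n:ℝ) := by
      intro x
      have h1 : cdfM ν x = (∑ r, cdfM (νr r) x) / (n:ℝ) := by
        rw [hν x, hRSS.G_avg x]
        have h : ∀ r, cdfM (νr r) x = Gr r x := fun r => hνr r x
        simp only [h]
      rw [h1, Finset.sum_sub_distrib, Finset.sum_const, Finset.card_univ, Fintype.card_fin,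
        nsmul_eq_mul, mul_one]
      field_simp
    rw [integral_congr_ae (ae_of_all _ hpt), integral_div,
      integral_finset_sum _ (fun r _ => integrable_oneSubCdf (μi i) (νr r))]
    congr 1
    exact Finset.sum_congr rfl fun r _ => (probLT_left (μi i) (νr r)).symm
  have hPμν : ∀ r, probLT μ (νr r) = (∑ i, probLT (μi i) (νr r)) / (m:ℝ) := by
    intro r
    rw [probLT_left μ (νr r), eq_div_iff (ne_of_gt hmR), mul_comm,
      integral_avg_meas μ μi hMμ _ (fun i => integrable_oneSubCdf (μi i) (νr r))]
    exact Finset.sum_congr rfl fun i _ => (probLT_left (μi i) (νr r)).symm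
  have hδ00 : δ₀ = (∑ i, ∑ r, probLT (μi i) (νr r)) / ((m:ℝ) * (n:ℝ)) := by
    rw [hδ₀, probLT_left μ ν]
    have h2 : (m:ℝ) * ∫ x, (1 - cdfM ν x) ∂μ = ∑ i, ∫ x, (1 - cdfM ν x) ∂(μi i) :=
      integral_avg_meas μ μi hMμ _ (fun i => integrable_oneSubCdf (μi i) ν)
    have h3 : ∀ i, ∫ x, (1 - cdfM ν x) ∂(μi i) = (∑ r, probLT (μi i) (νr r)) / (n:ℝ) :=
      fun i => (probLT_left (μi i) ν) ▸ hPiν i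
    rw [eq_div_iff (by positivity)]
    calc (∫ x, (1 - cdfM ν x) ∂μ) * ((m:ℝ) * (n:ℝ))
        = ((m:ℝ) * ∫ x, (1 - cdfM ν x) ∂μ) * (n:ℝ) := by ring
      _ = (∑ i, ∫ x, (1 - cdfM ν x) ∂(μi i)) * (n:ℝ) := by rw [h2]
      _ = (∑ i, (∑ r, probLT (μi i) (νr r)) / (n:ℝ)) * (n:ℝ) := by
          rw [Finset.sum_congr rfl fun i _ => h3 i]
      _ = ∑ i, ∑ r, probLT (μi i) (νr r) := by
          rw [Finset.sum_mul]
          exact Finset.sum_congr rfl fun i _ => div_mul_cancel₀ _ (ne_of_gt hnR)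
  have swap4 : ∀ g : Fin m → Fin k → Fin n → Fin l → ℝ,
      ∑ r, ∑ s, ∑ i, ∑ j, g i j r s = ∑ i, ∑ j, ∑ r, ∑ s, g i j r s := by
    intro g
    rw [show (∑ r, ∑ s, ∑ i, ∑ j, g i j r s) = ∑ r, ∑ i, ∑ s, ∑ j, g i j r s from
      Finset.sum_congr rfl fun r _ => Finset.sum_comm]
    rw [Finset.sum_comm]
    refine Finset.sum_congr rfl fun i _ => ?_
    rw [show (∑ r, ∑ s, ∑ j, g i j r s) = ∑ r, ∑ j, ∑ s, g i j r s from
      Finset.sum_congr rfl fun r _ => Finset.sum_comm]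
    exact Finset.sum_comm
  have hddsum : ∀ i, (∑ r, probLT (μi i) (νr r)) / (n:ℝ)
      = (∑ r : Fin n, ∑ _s : Fin l, probLT (μi i) (νr r)) / ((n:ℝ) * (l:ℝ)) := by
    intro i
    rw [show (∑ r : Fin n, ∑ _s : Fin l, probLT (μi i) (νr r))
        = ∑ r, (l:ℝ) * probLT (μi i) (νr r) from Finset.sum_congr rfl fun r _ => by
      simp [Finset.sum_const, Finset.card_univ, mul_comm]]
    rw [← Finset.mul_sum]
    field_simp
  have hddsum2 : ∀ r, (∑ i, probLT (μi i) (νr r)) / (m:ℝ)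
      = (∑ i : Fin m, ∑ _j : Fin k, probLT (μi i) (νr r)) / ((m:ℝ) * (k:ℝ)) := by
    intro r
    rw [show (∑ i : Fin m, ∑ _j : Fin k, probLT (μi i) (νr r))
        = ∑ i, (k:ℝ) * probLT (μi i) (νr r) from Finset.sum_congr rfl fun i _ => by
      simp [Finset.sum_const, Finset.card_univ, mul_comm]]
    rw [← Finset.mul_sum]
    field_simp
  have hA1 : ∀ ω, ∑ i, ∑ j, (phi10B P Y (X i j ω) - probLT (μi i) ν)
      = (∑ i, ∑ j, ∑ r, ∑ _s : Fin l, ((1 - cdfM (νr r) (X i j ω)) - probLT (μi i) (νr r)))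
        / ((n:ℝ) * (l:ℝ)) := by
    intro ω
    have step1 : ∀ i j, phi10B P Y (X i j ω) - probLT (μi i) ν
        = (∑ r, ∑ _s : Fin l, ((1 - cdfM (νr r) (X i j ω)) - probLT (μi i) (νr r)))
          / ((n:ℝ) * (l:ℝ)) := by
      intro i j
      rw [hphi10, hPiν i, hddsum i, div_sub_div_same]
      congr 1
      rw [← Finset.sum_sub_distrib]
      exact Finset.sum_congr rfl fun r _ => by rw [← Finset.sum_sub_distrib]
    rw [Finset.sum_congr rfl fun i _ => Finset.sum_congr rfl fun j _ => step1 i j]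
    simp only [← Finset.sum_div]
  have hA2 : ∀ ω, ∑ r, ∑ s, (phi01B P X (Y r s ω) - probLT μ (νr r))
      = (∑ i, ∑ _j : Fin k, ∑ r, ∑ s, (cdfM (μi i) (Y r s ω) - probLT (μi i) (νr r)))
        / ((m:ℝ) * (k:ℝ)) := by
    intro ω
    have step1 : ∀ r s, phi01B P X (Y r s ω) - probLT μ (νr r)
        = (∑ i, ∑ _j : Fin k, (cdfM (μi i) (Y r s ω) - probLT (μi i) (νr r)))
          / ((m:ℝ) * (k:ℝ)) := by
      intro r s
      rw [hphi01, hPμν r, hddsum2 r, div_sub_div_same]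
      congr 1
      rw [← Finset.sum_sub_distrib]
      exact Finset.sum_congr rfl fun i _ => by rw [← Finset.sum_sub_distrib]
    rw [Finset.sum_congr rfl fun r _ => Finset.sum_congr rfl fun s _ => step1 r s]
    simp only [← Finset.sum_div]
    rw [swap4 (fun i _j r s => (cdfM (μi i) (Y r s ω) - probLT (μi i) (νr r)))]
  have hconst4 : ∑ i, ∑ _j : Fin k, ∑ r, ∑ _s : Fin l, probLT (μi i) (νr r)
      = (k:ℝ) * (l:ℝ) * ∑ i, ∑ r, probLT (μi i) (νr r) := by
    simp only [Finset.sum_const, Finset.card_univ, Fintype.card_fin, nsmul_eq_mul,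
      Finset.mul_sum]
    exact Finset.sum_congr rfl fun i _ => Finset.sum_congr rfl fun r _ => by ring
  have hDhat : ∀ ω, deltaHatB X Y ω - δ₀
      = (∑ i, ∑ j, ∑ r, ∑ s, (phi (X i j ω) (Y r s ω) - probLT (μi i) (νr r)))
        / ((m:ℝ) * (k:ℝ) * (n:ℝ) * (l:ℝ)) := by
    intro ω
    unfold deltaHatB
    rw [hδ00]
    rw [show (∑ i, ∑ j, ∑ r, ∑ s, (phi (X i j ω) (Y r s ω) - probLT (μi i) (νr r)))
        = (∑ i, ∑ j, ∑ r, ∑ s, phi (X i j ω) (Y r s ω))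
          - ∑ i, ∑ _j : Fin k, ∑ r, ∑ _s : Fin l, probLT (μi i) (νr r) from by
      rw [← Finset.sum_sub_distrib]
      refine Finset.sum_congr rfl fun i _ => ?_
      rw [← Finset.sum_sub_distrib]
      refine Finset.sum_congr rfl fun j _ => ?_
      rw [← Finset.sum_sub_distrib]
      exact Finset.sum_congr rfl fun r _ => by rw [← Finset.sum_sub_distrib]]
    rw [hconst4, sub_div]
    congr 1
    rw [eq_div_iff (by positivity)]
    field_simp
  have hDelta : ∀ ω, T ω - (deltaHatB X Y ω - δ₀)
      = -(∑ i, ∑ j, ∑ r, ∑ s, rker (μi i) (νr r) (X i j ω) (Y r s ω))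
        / ((m:ℝ) * (k:ℝ) * (n:ℝ) * (l:ℝ)) := by
    intro ω
    rw [hT ω, hA1 ω, hA2 ω, hDhat ω]
    rw [div_div, div_div]
    rw [show (n:ℝ) * (l:ℝ) * ((m:ℝ) * (k:ℝ)) = (m:ℝ) * (k:ℝ) * (n:ℝ) * (l:ℝ) by ring,
      show (m:ℝ) * (k:ℝ) * ((n:ℝ) * (l:ℝ)) = (m:ℝ) * (k:ℝ) * (n:ℝ) * (l:ℝ) by ring]
    rw [← add_div, ← sub_div]
    congr 1
    rw [← Finset.sum_neg_distrib, ← Finset.sum_add_distrib, ← Finset.sum_sub_distrib]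
    refine Finset.sum_congr rfl fun i _ => ?_
    rw [← Finset.sum_neg_distrib, ← Finset.sum_add_distrib, ← Finset.sum_sub_distrib]
    refine Finset.sum_congr rfl fun j _ => ?_
    rw [← Finset.sum_neg_distrib, ← Finset.sum_add_distrib, ← Finset.sum_sub_distrib]
    refine Finset.sum_congr rfl fun r _ => ?_
    rw [← Finset.sum_neg_distrib, ← Finset.sum_add_distrib, ← Finset.sum_sub_distrib]
    refine Finset.sum_congr rfl fun s _ => ?_
    unfold rker
    ring
  set Q : ((Fin m × Fin k) × (Fin n × Fin l)) → Ω → ℝ :=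
    fun p ω => rker (μi p.1.1) (νr p.2.1) (X p.1.1 p.1.2 ω) (Y p.2.1 p.2.2 ω) with hQdef
  have hQm : ∀ p, Measurable (Q p) := fun p =>
    (measurable_rker _ _).comp ((hRSS.meas_X _ _).prodMk (hRSS.meas_Y _ _))
  have hQbd : ∀ p ω, |Q p ω| ≤ 4 := fun p ω => abs_rker_le _ _ _ _
  have hres : ∀ ω, ∑ p : (Fin m × Fin k) × (Fin n × Fin l), Q p ω
      = ∑ i, ∑ j, ∑ r, ∑ s, rker (μi i) (νr r) (X i j ω) (Y r s ω) := by
    intro ω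
    simp [hQdef, Fintype.sum_prod_type]
  have hVm : ∀ t : (Fin m × Fin k) ⊕ (Fin n × Fin l),
      Measurable ((Sum.elim (fun p : Fin m × Fin k => X p.1 p.2)
        (fun p : Fin n × Fin l => Y p.1 p.2)) t) := by
    rintro (u | v)
    · exact hRSS.meas_X u.1 u.2
    · exact hRSS.meas_Y v.1 v.2
  have hzero : ∀ p q : (Fin m × Fin k) × (Fin n × Fin l), p ≠ q →
      ∫ ω, Q p ω * Q q ω ∂P = 0 := by
    rintro ⟨u, v⟩ ⟨u', v'⟩ hpq
    simp only [hQdef]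
    by_cases h1 : u = u'
    · by_cases h2 : v = v'
      · exact absurd (by rw [h1, h2]) hpq
      · subst h1
        exact cross_zero_shareX P (hRSS.meas_X u.1 u.2) (hRSS.meas_Y v.1 v.2)
          (hRSS.meas_Y v'.1 v'.2)
          (hRSS.indep.indepFun (show (Sum.inr v : (Fin m × Fin k) ⊕ (Fin n × Fin l))
            ≠ Sum.inr v' by simpa using h2))
          ((hRSS.indep.indepFun_prodMk hVm (Sum.inr v) (Sum.inr v') (Sum.inl u)
            (by simp) (by simp)).symm)
          (lawX u.1 u.2) (lawY v.1 v.2) (lawY v'.1 v'.2) (μiAtom u.1)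
    · by_cases h2 : v = v'
      · subst h2
        exact cross_zero_shareY P (hRSS.meas_Y v.1 v.2) (hRSS.meas_X u.1 u.2)
          (hRSS.meas_X u'.1 u'.2)
          (hRSS.indep.indepFun (show (Sum.inl u : (Fin m × Fin k) ⊕ (Fin n × Fin l))
            ≠ Sum.inl u' by simpa using h1))
          ((hRSS.indep.indepFun_prodMk hVm (Sum.inl u) (Sum.inl u') (Sum.inr v)
            (by simp) (by simp)).symm)
          (lawY v.1 v.2) (lawX u.1 u.2) (lawX u'.1 u'.2) (μiAtom u.1) (μiAtom u'.1)
      · exact cross_zero_disjoint P (hRSS.meas_X u.1 u.2) (hRSS.meas_Y v.1 v.2)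
          (hRSS.meas_X u'.1 u'.2) (hRSS.meas_Y v'.1 v'.2)
          (hRSS.indep.indepFun_prodMk_prodMk hVm (Sum.inl u) (Sum.inr v)
            (Sum.inl u') (Sum.inr v') (by simpa using h1) (by simp) (by simp)
            (by simpa using h2))
          (hRSS.indep.indepFun (show (Sum.inl u : (Fin m × Fin k) ⊕ (Fin n × Fin l))
            ≠ Sum.inr v by simp))
          (lawX u.1 u.2) (lawY v.1 v.2) (μiAtom u.1)
  have hdiag : ∀ p : (Fin m × Fin k) × (Fin n × Fin l), ∫ ω, Q p ω ^ 2 ∂P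
      = probLT (μi p.1.1) (νr p.2.1) + probLT (μi p.1.1) (νr p.2.1) ^ 2
        - (∫ y, cdfM (μi p.1.1) y ^ 2 ∂(νr p.2.1))
        - ∫ x, (1 - cdfM (νr p.2.1) x) ^ 2 ∂(μi p.1.1) := by
    rintro ⟨u, v⟩
    simp only [hQdef]
    exact diag_val P (hRSS.meas_X u.1 u.2) (hRSS.meas_Y v.1 v.2)
      (hRSS.indep.indepFun (show (Sum.inl u : (Fin m × Fin k) ⊕ (Fin n × Fin l))
        ≠ Sum.inr v by simp))
      (lawX u.1 u.2) (lawY v.1 v.2) (μiAtom u.1)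
  have hQQint : ∀ p q, Integrable (fun ω => Q p ω * Q q ω) P := by
    intro p q
    refine integrable_of_bdd (C := 16) ((hQm p).mul (hQm q)).aestronglyMeasurable (fun ω => ?_)
    rw [abs_mul]
    calc |Q p ω| * |Q q ω| ≤ 4 * 4 :=
      mul_le_mul (hQbd p ω) (hQbd q ω) (abs_nonneg _) (by norm_num)
    _ = 16 := by norm_num
  have hsingle : ∀ p, ∑ q, ∫ ω, Q p ω * Q q ω ∂P = ∫ ω, Q p ω ^ 2 ∂P := by
    intro p
    rw [Finset.sum_eq_single_of_mem p (Finset.mem_univ p)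
      (fun q _ hq => hzero p q (Ne.symm hq))]
    refine integral_congr_ae (ae_of_all _ fun ω => ?_)
    ring
  have hIδ : ∫ ω, (T ω - (deltaHatB X Y ω - δ₀)) ^ 2 ∂P
      = (∑ i, ∑ r, (probLT (μi i) (νr r) + probLT (μi i) (νr r) ^ 2
          - (∫ y, cdfM (μi i) y ^ 2 ∂(νr r)) - ∫ x, (1 - cdfM (νr r) x) ^ 2 ∂(μi i)))
        * ((k:ℝ) * (l:ℝ)) / ((m:ℝ) * (k:ℝ) * (n:ℝ) * (l:ℝ)) ^ 2 := by
    have hpt : ∀ ω, (T ω - (deltaHatB X Y ω - δ₀)) ^ 2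
        = (∑ p : (Fin m × Fin k) × (Fin n × Fin l), Q p ω) ^ 2
          / ((m:ℝ) * (k:ℝ) * (n:ℝ) * (l:ℝ)) ^ 2 := by
      intro ω
      rw [hDelta ω, hres ω]
      rw [div_pow, neg_pow]
      norm_num
    rw [integral_congr_ae (ae_of_all _ hpt), integral_div]
    have hsq : ∀ ω, (∑ p : (Fin m × Fin k) × (Fin n × Fin l), Q p ω) ^ 2
        = ∑ p : (Fin m × Fin k) × (Fin n × Fin l),
            ∑ q : (Fin m × Fin k) × (Fin n × Fin l), Q p ω * Q q ω := by
      intro ω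
      rw [sq, Finset.sum_mul_sum]
    rw [integral_congr_ae (ae_of_all _ hsq)]
    rw [integral_finset_sum _ (fun p _ => integrable_finset_sum _ (fun q _ => hQQint p q))]
    rw [Finset.sum_congr rfl fun p _ => integral_finset_sum _ (fun q _ => hQQint p q)]
    rw [Finset.sum_congr rfl fun p _ => hsingle p]
    rw [Finset.sum_congr rfl fun p _ => hdiag p]
    congr 1
    rw [Fintype.sum_prod_type]
    rw [show (∑ u : Fin m × Fin k, ∑ v : Fin n × Fin l,
        (probLT (μi u.1) (νr v.1) + probLT (μi u.1) (νr v.1) ^ 2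
          - (∫ y, cdfM (μi u.1) y ^ 2 ∂(νr v.1)) - ∫ x, (1 - cdfM (νr v.1) x) ^ 2 ∂(μi u.1)))
        = ∑ u : Fin m × Fin k, ∑ r, ∑ _s : Fin l,
        (probLT (μi u.1) (νr r) + probLT (μi u.1) (νr r) ^ 2
          - (∫ y, cdfM (μi u.1) y ^ 2 ∂(νr r)) - ∫ x, (1 - cdfM (νr r) x) ^ 2 ∂(μi u.1)) from
      Finset.sum_congr rfl fun u _ => by simp only [Fintype.sum_prod_type]]
    rw [show (∑ u : Fin m × Fin k, ∑ r, ∑ _s : Fin l,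
        (probLT (μi u.1) (νr r) + probLT (μi u.1) (νr r) ^ 2
          - (∫ y, cdfM (μi u.1) y ^ 2 ∂(νr r)) - ∫ x, (1 - cdfM (νr r) x) ^ 2 ∂(μi u.1)))
        = ∑ i, ∑ _j : Fin k, ∑ r, ∑ _s : Fin l,
        (probLT (μi i) (νr r) + probLT (μi i) (νr r) ^ 2
          - (∫ y, cdfM (μi i) y ^ 2 ∂(νr r)) - ∫ x, (1 - cdfM (νr r) x) ^ 2 ∂(μi i)) from
      by simp only [Fintype.sum_prod_type]]
    simp only [Finset.sum_const, Finset.card_univ, Fintype.card_fin, nsmul_eq_mul]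
    rw [Finset.sum_mul]
    refine Finset.sum_congr rfl fun i _ => ?_
    rw [Finset.sum_mul, Finset.mul_sum]
    exact Finset.sum_congr rfl fun r _ => by ring
  have hαBar : alphaBarInt ν Fi
      = (∑ i, ∑ r, ∫ y, cdfM (μi i) y ^ 2 ∂(νr r)) / ((m:ℝ) * (n:ℝ)) := by
    unfold alphaBarInt
    have h1 : ∀ x, (∑ i, Fi i x ^ 2) / (m:ℝ) = (∑ i, cdfM (μi i) x ^ 2) / (m:ℝ) := by
      intro x
      congr 1
      exact Finset.sum_congr rfl fun i _ => by rw [← hμi i x]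
    rw [integral_congr_ae (ae_of_all _ h1), integral_div,
      integral_finset_sum _ (fun i _ => integrable_c_sq (μi i) ν)]
    have h2 : ∀ i, ∫ x, cdfM (μi i) x ^ 2 ∂ν
        = (∑ r, ∫ y, cdfM (μi i) y ^ 2 ∂(νr r)) / (n:ℝ) := by
      intro i
      rw [eq_div_iff (ne_of_gt hnR), mul_comm,
        integral_avg_meas ν νr hMν _ (fun r => integrable_c_sq (μi i) (νr r))]
    rw [Finset.sum_congr rfl fun i _ => h2 i, ← Finset.sum_div, div_div, mul_comm (n:ℝ)]
  have hβBar : betaBarInt μ Gr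
      = (∑ i, ∑ r, ∫ x, (1 - cdfM (νr r) x) ^ 2 ∂(μi i)) / ((m:ℝ) * (n:ℝ)) := by
    unfold betaBarInt
    have h1 : ∀ x, (∑ r, (1 - Gr r x) ^ 2) / (n:ℝ)
        = (∑ r, (1 - cdfM (νr r) x) ^ 2) / (n:ℝ) := by
      intro x
      congr 1
      exact Finset.sum_congr rfl fun r _ => by rw [← hνr r x]
    rw [integral_congr_ae (ae_of_all _ h1), integral_div,
      integral_finset_sum _ (fun r _ => integrable_u_sq μ (νr r))]
    have h2 : ∀ r, ∫ x, (1 - cdfM (νr r) x) ^ 2 ∂μ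
        = (∑ i, ∫ x, (1 - cdfM (νr r) x) ^ 2 ∂(μi i)) / (m:ℝ) := by
      intro r
      rw [eq_div_iff (ne_of_gt hmR), mul_comm,
        integral_avg_meas μ μi hMμ _ (fun i => integrable_u_sq (μi i) (νr r))]
    rw [Finset.sum_congr rfl fun r _ => h2 r, ← Finset.sum_div, div_div, mul_comm (m:ℝ),
      Finset.sum_comm, mul_comm (n:ℝ)]
  have hδBar : deltaBar0sq μi νr
      = (∑ i, ∑ r, probLT (μi i) (νr r) ^ 2) / ((m:ℝ) * (n:ℝ)) := rfl
  have hsplit : ∑ i, ∑ r, (probLT (μi i) (νr r) + probLT (μi i) (νr r) ^ 2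
        - (∫ y, cdfM (μi i) y ^ 2 ∂(νr r)) - ∫ x, (1 - cdfM (νr r) x) ^ 2 ∂(μi i))
      = (∑ i, ∑ r, probLT (μi i) (νr r)) + (∑ i, ∑ r, probLT (μi i) (νr r) ^ 2)
        - (∑ i, ∑ r, ∫ y, cdfM (μi i) y ^ 2 ∂(νr r))
        - ∑ i, ∑ r, ∫ x, (1 - cdfM (νr r) x) ^ 2 ∂(μi i) := by
    rw [← Finset.sum_add_distrib, ← Finset.sum_sub_distrib, ← Finset.sum_sub_distrib]
    refine Finset.sum_congr rfl fun i _ => ?_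
    rw [← Finset.sum_add_distrib, ← Finset.sum_sub_distrib, ← Finset.sum_sub_distrib]
  have hMKNL : (0:ℝ) < (m:ℝ) * (k:ℝ) + (n:ℝ) * (l:ℝ) := by positivity
  have heq : (((m : ℝ) * (k : ℝ) * (n : ℝ) * (l : ℝ)) / ((m : ℝ) * (k : ℝ) + (n : ℝ) * (l : ℝ))) *
        ∫ ω, (T ω - (deltaHatB X Y ω - δ₀)) ^ 2 ∂P =
      (δ₀ - deltaBar0sq μi νr - (alphaBarInt ν Fi - deltaBar0sq μi νr) -
          (betaBarInt μ Gr - deltaBar0sq μi νr)) /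
        ((m : ℝ) * (k : ℝ) + (n : ℝ) * (l : ℝ)) := by
    have habs : ∀ A B C D : ℝ,
        (((m:ℝ) * (k:ℝ) * (n:ℝ) * (l:ℝ)) / ((m:ℝ) * (k:ℝ) + (n:ℝ) * (l:ℝ))) *
          ((A + B - C - D) * ((k:ℝ) * (l:ℝ)) / ((m:ℝ) * (k:ℝ) * (n:ℝ) * (l:ℝ)) ^ 2)
        = (A / ((m:ℝ) * (n:ℝ)) - B / ((m:ℝ) * (n:ℝ))
            - (C / ((m:ℝ) * (n:ℝ)) - B / ((m:ℝ) * (n:ℝ)))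
            - (D / ((m:ℝ) * (n:ℝ)) - B / ((m:ℝ) * (n:ℝ))))
          / ((m:ℝ) * (k:ℝ) + (n:ℝ) * (l:ℝ)) := by
      intro A B C D
      field_simp
      ring
    rw [hIδ, hsplit, hδ00, hδBar, hαBar, hβBar]
    exact habs _ _ _ _
  refine ⟨heq, ?_⟩
  rw [heq]
  rw [div_le_div_iff_of_pos_right hMKNL]
  have haa : ∀ i r, probLT (μi i) (νr r) ^ 2 ≤ ∫ y, cdfM (μi i) y ^ 2 ∂(νr r) := by
    intro i r
    have h0 : 0 ≤ ∫ y, (cdfM (μi i) y - probLT (μi i) (νr r)) ^ 2 ∂(νr r) :=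
      integral_nonneg fun y => sq_nonneg _
    have hexp : (fun y => (cdfM (μi i) y - probLT (μi i) (νr r)) ^ 2)
        = fun y => (cdfM (μi i) y ^ 2 - 2 * probLT (μi i) (νr r) * cdfM (μi i) y)
          + probLT (μi i) (νr r) ^ 2 := funext fun y => by ring
    have hb1 : Integrable (fun y => cdfM (μi i) y ^ 2
        - 2 * probLT (μi i) (νr r) * cdfM (μi i) y) (νr r) := by
      exact (integrable_c_sq (μi i) (νr r)).sub ((integrable_cdf (μi i) (νr r)).const_mul _)
    have hb2 : Integrable (fun y => 2 * probLT (μi i) (νr r) * cdfM (μi i) y) (νr r) := by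
      exact (integrable_cdf (μi i) (νr r)).const_mul _
    rw [hexp, integral_add hb1 (integrable_const _),
      integral_sub (integrable_c_sq (μi i) (νr r)) hb2, integral_const_mul,
      integral_const, int_c_eq (μi i) (νr r) (μiAtom i)] at h0
    simp only [measure_univ, probReal_univ, ENNReal.toReal_one, smul_eq_mul, one_mul] at h0
    have hsq : probLT (μi i) (νr r) ^ 2 = probLT (μi i) (νr r) * probLT (μi i) (νr r) :=
      pow_two _
    linarith [h0, hsq]
  have hbb : ∀ i r, probLT (μi i) (νr r) ^ 2 ≤ ∫ x, (1 - cdfM (νr r) x) ^ 2 ∂(μi i) := by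
    intro i r
    have h0 : 0 ≤ ∫ x, ((1 - cdfM (νr r) x) - probLT (μi i) (νr r)) ^ 2 ∂(μi i) :=
      integral_nonneg fun x => sq_nonneg _
    have hexp : (fun x => ((1 - cdfM (νr r) x) - probLT (μi i) (νr r)) ^ 2)
        = fun x => ((1 - cdfM (νr r) x) ^ 2
          - 2 * probLT (μi i) (νr r) * (1 - cdfM (νr r) x))
          + probLT (μi i) (νr r) ^ 2 := funext fun x => by ring
    have hb1 : Integrable (fun x => (1 - cdfM (νr r) x) ^ 2
        - 2 * probLT (μi i) (νr r) * (1 - cdfM (νr r) x)) (μi i) := by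
      exact (integrable_u_sq (μi i) (νr r)).sub
        ((integrable_oneSubCdf (μi i) (νr r)).const_mul _)
    have hb2 : Integrable (fun x => 2 * probLT (μi i) (νr r) * (1 - cdfM (νr r) x)) (μi i) := by
      exact (integrable_oneSubCdf (μi i) (νr r)).const_mul _
    rw [hexp, integral_add hb1 (integrable_const _),
      integral_sub (integrable_u_sq (μi i) (νr r)) hb2, integral_const_mul,
      integral_const, int_u_eq (μi i) (νr r)] at h0
    simp only [measure_univ, probReal_univ, ENNReal.toReal_one, smul_eq_mul, one_mul] at h0
    have hsq : probLT (μi i) (νr r) ^ 2 = probLT (μi i) (νr r) * probLT (μi i) (νr r) :=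
      pow_two _
    linarith [h0, hsq]
  have hα0 : deltaBar0sq μi νr ≤ alphaBarInt ν Fi := by
    rw [hαBar, hδBar]
    refine div_le_div_of_nonneg_right ?_ (by positivity)
    exact Finset.sum_le_sum fun i _ => Finset.sum_le_sum fun r _ => haa i r
  have hβ0 : deltaBar0sq μi νr ≤ betaBarInt μ Gr := by
    rw [hβBar, hδBar]
    refine div_le_div_of_nonneg_right ?_ (by positivity)
    exact Finset.sum_le_sum fun i _ => Finset.sum_le_sum fun r _ => hbb i r
  linarith [hα0, hβ0]
end RSSAUC
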